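/- arXiv:1705.01482 — 10 statements merged into one kernel-verified Lean document; each statement's English description precedes it below -/
import Mathlib

section
/- Let (z*, μ̲*, μ̄*) be a KKT point of the problem min_{z∈Z} f(z) subject to v̲ ≤ Az + a ≤ v̄, and suppose there exist z̃ ∈ Z and δ > 0 such that z̃ is a strict Slater point with margin δ. Then the optimal dual multipliers are bounded; explicitly, Σⱼ μ̲*ⱼ + Σⱼ μ̄*ⱼ ≤ (f(z̃) − f(z*))/δ. -/
open scoped InnerProductSpace Matrix

/-! Test the variational inequality at `z = z̃` and bound its two parts: convexity gives
`⟪∇f z*, z̃ - z*⟫ ≤ f z̃ - f z*`, and the constraint term `⟪μ̄* - μ̲*, A z̃ - A z*⟫` is at most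
`-δ (∑ μ̲* + ∑ μ̄*)`, because by complementary slackness `A z* + a` may be replaced by the bounds
`v̲, v̄`, from which the Slater point keeps distance `δ`. -/

theorem ConvexOn.apply_sub_le_of_hasFDerivAt {E : Type*} [NormedAddCommGroup E] [NormedSpace ℝ E]
    {s : Set E} {f : E → ℝ} {f' : E →L[ℝ] ℝ} {x y : E} (hf : ConvexOn ℝ s f) (hx : x ∈ s)
    (hy : y ∈ s) (hf' : HasFDerivAt f f' x) :
    f' (y - x) ≤ f y - f x := by
  let line : ℝ →ᵃ[ℝ] E := AffineMap.lineMap x y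
  have hconv : ConvexOn ℝ (line ⁻¹' s) (f ∘ line) := hf.comp_affineMap line
  have hderiv : HasDerivAt (f ∘ line) (f' (y - x)) 0 :=
    hf'.comp_hasDerivAt_of_eq 0 AffineMap.hasDerivAt_lineMap (AffineMap.lineMap_apply_zero x y).symm
  have hslope := hconv.le_slope_of_hasDerivAt (x := 0) (y := 1)
    (by simpa [line] using hx) (by simpa [line] using hy) zero_lt_one hderiv
  simpa [slope_def_field, line] using hslope

theorem ConvexOn.inner_sub_le_of_hasGradientAt {E : Type*} [NormedAddCommGroup E]
    [InnerProductSpace ℝ E] [CompleteSpace E] {s : Set E} {f : E → ℝ} {g x y : E}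
    (hf : ConvexOn ℝ s f) (hx : x ∈ s) (hy : y ∈ s) (hg : HasGradientAt f g x) :
    ⟪g, y - x⟫_ℝ ≤ f y - f x := by
  simpa using hf.apply_sub_le_of_hasFDerivAt hx hy hg.hasFDerivAt

theorem Matrix.inner_toEuclideanLin_transpose_left {ι κ : Type*} [Fintype ι] [Fintype κ]
    [DecidableEq ι] [DecidableEq κ] (A : Matrix ι κ ℝ) (u : EuclideanSpace ℝ ι)
    (x : EuclideanSpace ℝ κ) :
    ⟪Matrix.toEuclideanLin Aᵀ u, x⟫_ℝ = ⟪u, Matrix.toEuclideanLin A x⟫_ℝ := by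
  rw [← Matrix.conjTranspose_eq_transpose_of_trivial,
    Matrix.toEuclideanLin_conjTranspose_eq_adjoint, LinearMap.adjoint_inner_left]

theorem inner_multipliers_sub_le_of_slater {ι : Type*} [Fintype ι]
    {μlo μhi vlo vhi s t : EuclideanSpace ℝ ι} {δ : ℝ}
    (hμlo : ∀ j, 0 ≤ μlo j) (hμhi : ∀ j, 0 ≤ μhi j)
    (hcomplo : ∑ j, μlo j * (s j - vlo j) = 0) (hcomphi : ∑ j, μhi j * (vhi j - s j) = 0)
    (hslater : ∀ j, vlo j + δ ≤ t j ∧ t j ≤ vhi j - δ) :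
    ⟪μhi - μlo, t - s⟫_ℝ ≤ -δ * (∑ j, μlo j + ∑ j, μhi j) := by
  have hterm : ∀ j, (μhi j - μlo j) * (t j - s j) + δ * (μlo j + μhi j) ≤
      μlo j * (s j - vlo j) + μhi j * (vhi j - s j) := by
    intro j
    nlinarith [mul_le_mul_of_nonneg_left (hslater j).1 (hμlo j),
      mul_le_mul_of_nonneg_left (hslater j).2 (hμhi j)]
  have hsum : ⟪μhi - μlo, t - s⟫_ℝ + δ * (∑ j, μlo j + ∑ j, μhi j) ≤ 0 := calc
    _ = ∑ j, ((μhi j - μlo j) * (t j - s j) + δ * (μlo j + μhi j)) := by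
      rw [Finset.sum_add_distrib, ← Finset.mul_sum, Finset.sum_add_distrib]
      simp only [PiLp.inner_apply, PiLp.sub_apply, RCLike.inner_apply, conj_trivial, mul_comm]
    _ ≤ ∑ j, (μlo j * (s j - vlo j) + μhi j * (vhi j - s j)) := Finset.sum_le_sum fun j _ => hterm j
    _ = 0 := by rw [Finset.sum_add_distrib, hcomplo, hcomphi, add_zero]
  linarith

theorem dual_multipliers_bounded_general {n m : ℕ}
    (Z : Set (EuclideanSpace ℝ (Fin n)))
    (f : EuclideanSpace ℝ (Fin n) → ℝ)
    (f' : EuclideanSpace ℝ (Fin n) → EuclideanSpace ℝ (Fin n))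
    (hf : ∀ x, HasGradientAt f (f' x) x)
    (hfconv : ConvexOn ℝ Set.univ f)
    (A : Matrix (Fin m) (Fin n) ℝ) (a vlo vhi : EuclideanSpace ℝ (Fin m))
    -- the KKT point (z*, μ̲*, μ̄*)
    (zs : EuclideanSpace ℝ (Fin n)) (μlo μhi : EuclideanSpace ℝ (Fin m))
    (hμlo : ∀ j, 0 ≤ μlo j) (hμhi : ∀ j, 0 ≤ μhi j)
    -- variational inequality: ⟨∇f(z*) + Aᵀ(μ̄* − μ̲*), z − z*⟩ ≥ 0 for all z ∈ Z
    (hVI : ∀ z ∈ Z, 0 ≤ ⟪f' zs + Matrix.toEuclideanLin Aᵀ (μhi - μlo), z - zs⟫_ℝ)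
    -- complementary slackness
    (hcomplo : ∑ j, μlo j * (Matrix.toEuclideanLin A zs j + a j - vlo j) = 0)
    (hcomphi : ∑ j, μhi j * (vhi j - Matrix.toEuclideanLin A zs j - a j) = 0)
    -- strict Slater point z̃ with margin δ > 0
    (zt : EuclideanSpace ℝ (Fin n)) (δ : ℝ) (hδ : 0 < δ) (hzt : zt ∈ Z)
    (hslater : ∀ j, vlo j + δ ≤ Matrix.toEuclideanLin A zt j + a j ∧
      Matrix.toEuclideanLin A zt j + a j ≤ vhi j - δ) :
    ∑ j, μlo j + ∑ j, μhi j ≤ (f zt - f zs) / δ := by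
  have hgrad : ⟪f' zs, zt - zs⟫_ℝ ≤ f zt - f zs :=
    hfconv.inner_sub_le_of_hasGradientAt trivial trivial (hf zs)
  have hconstr : ⟪Matrix.toEuclideanLin Aᵀ (μhi - μlo), zt - zs⟫_ℝ ≤
      -δ * (∑ j, μlo j + ∑ j, μhi j) := by
    rw [Matrix.inner_toEuclideanLin_transpose_left, map_sub,
      ← add_sub_add_right_eq_sub (Matrix.toEuclideanLin A zt) _ a]
    exact inner_multipliers_sub_le_of_slater (s := Matrix.toEuclideanLin A zs + a) hμlo hμhi
      hcomplo (by simpa only [PiLp.add_apply, sub_sub] using hcomphi) hslater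
  have hvi := hVI zt hzt
  rw [inner_add_left] at hvi
  rw [le_div_iff₀ hδ]
  linarith

/-- Boundedness of the optimal dual multipliers at a KKT point of
`min_{z ∈ Z} f(z)  s.t.  v̲ ≤ A z + a ≤ v̄`, given a strict Slater point with margin `δ`. -/
theorem dual_multipliers_bounded {n m : ℕ}
    (Z : Set (EuclideanSpace ℝ (Fin n)))
    (hZne : Z.Nonempty) (hZcomp : IsCompact Z) (hZconv : Convex ℝ Z)
    (f : EuclideanSpace ℝ (Fin n) → ℝ)
    (f' : EuclideanSpace ℝ (Fin n) → EuclideanSpace ℝ (Fin n))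
    (hf : ∀ x, HasGradientAt f (f' x) x)
    (hfconv : ConvexOn ℝ Set.univ f)
    (A : Matrix (Fin m) (Fin n) ℝ) (a vlo vhi : EuclideanSpace ℝ (Fin m))
    -- the KKT point (z*, μ̲*, μ̄*)
    (zs : EuclideanSpace ℝ (Fin n)) (μlo μhi : EuclideanSpace ℝ (Fin m))
    (hzs : zs ∈ Z) (hμlo : ∀ j, 0 ≤ μlo j) (hμhi : ∀ j, 0 ≤ μhi j)
    -- primal feasibility: v̲ ≤ A z* + a ≤ v̄
    (hfeas : ∀ j, vlo j ≤ Matrix.toEuclideanLin A zs j + a j ∧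
      Matrix.toEuclideanLin A zs j + a j ≤ vhi j)
    -- variational inequality: ⟨∇f(z*) + Aᵀ(μ̄* − μ̲*), z − z*⟩ ≥ 0 for all z ∈ Z
    (hVI : ∀ z ∈ Z, 0 ≤ ⟪f' zs + Matrix.toEuclideanLin Aᵀ (μhi - μlo), z - zs⟫_ℝ)
    -- complementary slackness
    (hcomplo : ∑ j, μlo j * (Matrix.toEuclideanLin A zs j + a j - vlo j) = 0)
    (hcomphi : ∑ j, μhi j * (vhi j - Matrix.toEuclideanLin A zs j - a j) = 0)
    -- strict Slater point z̃ with margin δ > 0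
    (zt : EuclideanSpace ℝ (Fin n)) (δ : ℝ) (hδ : 0 < δ) (hzt : zt ∈ Z)
    (hslater : ∀ j, vlo j + δ ≤ Matrix.toEuclideanLin A zt j + a j ∧
      Matrix.toEuclideanLin A zt j + a j ≤ vhi j - δ) :
    ∑ j, μlo j + ∑ j, μhi j ≤ (f zt - f zs) / δ :=
  dual_multipliers_bounded_general Z f f' hf hfconv A a vlo vhi zs μlo μhi hμlo hμhi hVI hcomplo
    hcomphi zt δ hδ hzt hslater
end

section
/- Let (z*, μ̲*, μ̄*) be a KKT point of the problem min_{z∈Z} f(z) subject to v̲ ≤ Az + a ≤ v̄, let z̃ ∈ Z be a strict Slater point with margin δ > 0, let γ ≥ 0, and let D : ℝᵐ → ℝ be differentiable with ‖∇D(Az + a)‖ ≤ G for all z ∈ Z. Then the incentive signal s* := Aᵀ(μ̲* − μ̄* − γ∇D(Az* + a)) is bounded; explicitly, ‖s*‖ ≤ ‖A‖_op · ((f(z̃) − f(z*))/δ + γG), where ‖A‖_op is the operator norm of A with respect to Euclidean norms. -/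
open scoped InnerProductSpace Matrix

theorem EuclideanSpace.norm_le_sum_norm {ι : Type*} [Fintype ι] (x : EuclideanSpace ℝ ι) :
    ‖x‖ ≤ ∑ i, ‖x i‖ := by
  refine abs_le_of_sq_le_sq' ?_ (by positivity) |>.2
  calc ‖x‖ ^ 2 = ∑ i, ‖x i‖ ^ 2 := EuclideanSpace.norm_sq_eq x
    _ ≤ (∑ i, ‖x i‖) ^ 2 := Finset.sum_sq_le_sq_sum_of_nonneg fun _ _ ↦ norm_nonneg _

theorem EuclideanSpace.norm_le_sum_of_nonneg {ι : Type*} [Fintype ι] {x : EuclideanSpace ℝ ι}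
    (hx : ∀ i, 0 ≤ x i) : ‖x‖ ≤ ∑ i, x i := by
  simpa only [Real.norm_of_nonneg (hx _)] using x.norm_le_sum_norm

open scoped Matrix.Norms.L2Operator in
theorem Matrix.norm_toEuclideanLin_transpose_le {m n : Type*} [Fintype m] [Fintype n]
    [DecidableEq m] [DecidableEq n] (A : Matrix m n ℝ) (w : EuclideanSpace ℝ m) :
    ‖toEuclideanLin Aᵀ w‖ ≤ ‖LinearMap.toContinuousLinearMap (toEuclideanLin A)‖ * ‖w‖ := by
  have := (toEuclideanLin.trans LinearMap.toContinuousLinearMap Aᵀ).le_opNorm w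
  rwa [← l2_opNorm_def, ← conjTranspose_eq_transpose_of_trivial, l2_opNorm_conjTranspose] at this

theorem Matrix.inner_toEuclideanLin_transpose {m n : Type*} [Fintype m] [Fintype n]
    [DecidableEq m] [DecidableEq n] (A : Matrix m n ℝ) (w : EuclideanSpace ℝ m)
    (x : EuclideanSpace ℝ n) :
    ⟪toEuclideanLin Aᵀ w, x⟫_ℝ = ∑ j, w j * toEuclideanLin A x j := by
  rw [← conjTranspose_eq_transpose_of_trivial, toEuclideanLin_conjTranspose_eq_adjoint,
    LinearMap.adjoint_inner_left]
  simp [PiLp.inner_apply, mul_comm]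

theorem mul_sum_multipliers_le_of_slater {ι : Type*} [Fintype ι]
    {μlo μhi vlo vhi a b c : ι → ℝ} {δ : ℝ}
    (hμlo : ∀ j, 0 ≤ μlo j) (hμhi : ∀ j, 0 ≤ μhi j)
    (hcomplo : ∑ j, μlo j * (b j + a j - vlo j) = 0)
    (hcomphi : ∑ j, μhi j * (vhi j - b j - a j) = 0)
    (hslater : ∀ j, vlo j + δ ≤ c j + a j ∧ c j + a j ≤ vhi j - δ) :
    δ * ∑ j, (μlo j + μhi j) ≤ ∑ j, (μlo j - μhi j) * (c j - b j) := by
  calc δ * ∑ j, (μlo j + μhi j)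
      ≤ ∑ j, (μlo j * (c j + a j - vlo j) + μhi j * (vhi j - c j - a j)) := by
        rw [Finset.mul_sum]
        refine Finset.sum_le_sum fun j _ => ?_
        linarith [mul_le_mul_of_nonneg_left (hslater j).1 (hμlo j),
          mul_le_mul_of_nonneg_left (hslater j).2 (hμhi j)]
    _ = ∑ j, (μlo j * (c j + a j - vlo j) + μhi j * (vhi j - c j - a j))
          - ∑ j, μlo j * (b j + a j - vlo j) - ∑ j, μhi j * (vhi j - b j - a j) := by
        rw [hcomplo, hcomphi, sub_zero, sub_zero]
    _ = ∑ j, (μlo j - μhi j) * (c j - b j) := by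
        rw [← Finset.sum_sub_distrib, ← Finset.sum_sub_distrib]
        exact Finset.sum_congr rfl fun j _ => by ring

theorem incentive_signal_bounded_general {n m : ℕ}
    (Z : Set (EuclideanSpace ℝ (Fin n)))
    (f : EuclideanSpace ℝ (Fin n) → ℝ)
    (f' : EuclideanSpace ℝ (Fin n) → EuclideanSpace ℝ (Fin n))
    (hf : ∀ x, HasGradientAt f (f' x) x)
    (hfconv : ConvexOn ℝ Set.univ f)
    (A : Matrix (Fin m) (Fin n) ℝ) (a vlo vhi : EuclideanSpace ℝ (Fin m))
    -- the KKT point (z*, μ̲*, μ̄*)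
    (zs : EuclideanSpace ℝ (Fin n)) (μlo μhi : EuclideanSpace ℝ (Fin m))
    (hzs : zs ∈ Z) (hμlo : ∀ j, 0 ≤ μlo j) (hμhi : ∀ j, 0 ≤ μhi j)
    (hVI : ∀ z ∈ Z, 0 ≤ ⟪f' zs + Matrix.toEuclideanLin Aᵀ (μhi - μlo), z - zs⟫_ℝ)
    (hcomplo : ∑ j, μlo j * (Matrix.toEuclideanLin A zs j + a j - vlo j) = 0)
    (hcomphi : ∑ j, μhi j * (vhi j - Matrix.toEuclideanLin A zs j - a j) = 0)
    -- strict Slater point z̃ with margin δ > 0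
    (zt : EuclideanSpace ℝ (Fin n)) (δ : ℝ) (hδ : 0 < δ) (hzt : zt ∈ Z)
    (hslater : ∀ j, vlo j + δ ≤ Matrix.toEuclideanLin A zt j + a j ∧
      Matrix.toEuclideanLin A zt j + a j ≤ vhi j - δ)
    -- the function D, its gradient, and the gradient bound G on A(Z) + a
    (γ : ℝ) (hγ : 0 ≤ γ)
    (D' : EuclideanSpace ℝ (Fin m) → EuclideanSpace ℝ (Fin m))
    (G : ℝ) (hG : ∀ z ∈ Z, ‖D' (Matrix.toEuclideanLin A z + a)‖ ≤ G) :
    ‖Matrix.toEuclideanLin Aᵀ (μlo - μhi - γ • D' (Matrix.toEuclideanLin A zs + a))‖ ≤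
      ‖LinearMap.toContinuousLinearMap (Matrix.toEuclideanLin A)‖ *
        ((f zt - f zs) / δ + γ * G) := by
  set S := ∑ j, (μlo j + μhi j)
  have hdual : δ * S ≤ ⟪Matrix.toEuclideanLin Aᵀ (μlo - μhi), zt - zs⟫_ℝ := by
    rw [A.inner_toEuclideanLin_transpose, map_sub]
    simpa using mul_sum_multipliers_le_of_slater hμlo hμhi hcomplo hcomphi hslater
  have hgrad : ⟪f' zs, zt - zs⟫_ℝ ≤ f zt - f zs := by
    simpa using hfconv.apply_sub_le_of_hasFDerivAt (Set.mem_univ zs) (Set.mem_univ zt)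
      (hf zs).hasFDerivAt
  have hVIt := hVI zt hzt
  rw [inner_add_left, ← neg_sub μlo, map_neg, inner_neg_left] at hVIt
  have hS : S ≤ (f zt - f zs) / δ := by
    rw [le_div_iff₀ hδ]
    linarith
  have hμ : ‖μlo - μhi‖ ≤ S :=
    (norm_sub_le _ _).trans <| (add_le_add (EuclideanSpace.norm_le_sum_of_nonneg hμlo)
      (EuclideanSpace.norm_le_sum_of_nonneg hμhi)).trans_eq Finset.sum_add_distrib.symm
  have hpenalty : ‖γ • D' (Matrix.toEuclideanLin A zs + a)‖ ≤ γ * G := by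
    rw [norm_smul, Real.norm_of_nonneg hγ]
    exact mul_le_mul_of_nonneg_left (hG zs hzs) hγ
  calc _ ≤ _ := A.norm_toEuclideanLin_transpose_le _
    _ ≤ _ := by
      gcongr
      exact (norm_sub_le _ _).trans (by linarith)

/-- Boundedness of the incentive signal
`s* = Aᵀ(μ̲* − μ̄* − γ ∇D(A z* + a))` at a KKT point, given a strict Slater point:
`‖s*‖ ≤ ‖A‖_op ((f(z̃) − f(z*))/δ + γ G)`. -/
theorem incentive_signal_bounded {n m : ℕ}
    (Z : Set (EuclideanSpace ℝ (Fin n)))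
    (hZne : Z.Nonempty) (hZcomp : IsCompact Z) (hZconv : Convex ℝ Z)
    (f : EuclideanSpace ℝ (Fin n) → ℝ)
    (f' : EuclideanSpace ℝ (Fin n) → EuclideanSpace ℝ (Fin n))
    (hf : ∀ x, HasGradientAt f (f' x) x)
    (hfconv : ConvexOn ℝ Set.univ f)
    (A : Matrix (Fin m) (Fin n) ℝ) (a vlo vhi : EuclideanSpace ℝ (Fin m))
    -- the KKT point (z*, μ̲*, μ̄*)
    (zs : EuclideanSpace ℝ (Fin n)) (μlo μhi : EuclideanSpace ℝ (Fin m))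
    (hzs : zs ∈ Z) (hμlo : ∀ j, 0 ≤ μlo j) (hμhi : ∀ j, 0 ≤ μhi j)
    (hfeas : ∀ j, vlo j ≤ Matrix.toEuclideanLin A zs j + a j ∧
      Matrix.toEuclideanLin A zs j + a j ≤ vhi j)
    (hVI : ∀ z ∈ Z, 0 ≤ ⟪f' zs + Matrix.toEuclideanLin Aᵀ (μhi - μlo), z - zs⟫_ℝ)
    (hcomplo : ∑ j, μlo j * (Matrix.toEuclideanLin A zs j + a j - vlo j) = 0)
    (hcomphi : ∑ j, μhi j * (vhi j - Matrix.toEuclideanLin A zs j - a j) = 0)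
    -- strict Slater point z̃ with margin δ > 0
    (zt : EuclideanSpace ℝ (Fin n)) (δ : ℝ) (hδ : 0 < δ) (hzt : zt ∈ Z)
    (hslater : ∀ j, vlo j + δ ≤ Matrix.toEuclideanLin A zt j + a j ∧
      Matrix.toEuclideanLin A zt j + a j ≤ vhi j - δ)
    -- the function D, its gradient, and the gradient bound G on A(Z) + a
    (γ : ℝ) (hγ : 0 ≤ γ)
    (D : EuclideanSpace ℝ (Fin m) → ℝ)
    (D' : EuclideanSpace ℝ (Fin m) → EuclideanSpace ℝ (Fin m))
    (hD : ∀ v, HasGradientAt D (D' v) v)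
    (G : ℝ) (hG : ∀ z ∈ Z, ‖D' (Matrix.toEuclideanLin A z + a)‖ ≤ G) :
    ‖Matrix.toEuclideanLin Aᵀ (μlo - μhi - γ • D' (Matrix.toEuclideanLin A zs + a))‖ ≤
      ‖LinearMap.toContinuousLinearMap (Matrix.toEuclideanLin A)‖ *
        ((f zt - f zs) / δ + γ * G) :=
  incentive_signal_bounded_general Z f f' hf hfconv A a vlo vhi zs μlo μhi hzs hμlo hμhi hVI hcomplo
    hcomphi zt δ hδ hzt hslater γ hγ D' G hG
end

section
/- Suppose z* = (p*, q*) ∈ Z₁ × ⋯ × Z_N together with componentwise-nonnegative multipliers μ̲*, μ̄* ∈ ℝᴺ satisfies the KKT conditions of the relaxed problem (P3): (a) v̲ ≤ v̂(z*) ≤ v̄; (b) ⟨μ̲*, v̂(z*) − v̲⟩ = 0 and ⟨μ̄*, v̄ − v̂(z*)⟩ = 0; (c) for all (p, q) ∈ Z₁ × ⋯ × Z_N, ⟨∇_p F(z*) − Rᵀ(μ̲* − μ̄*), p − p*⟩ + ⟨∇_q F(z*) − Xᵀ(μ̲* − μ̄*), q − q*⟩ ≥ 0. Define the incentive signals α*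 := Rᵀ(μ̲* − μ̄* − γ∇D(v̂(z*))) and β* := Xᵀ(μ̲* − μ̄* − γ∇D(v̂(z*))). Then: (i) for every i, (p*ᵢ, q*ᵢ) = bᵢ(α*ᵢ, β*ᵢ), i.e. (p*ᵢ, q*ᵢ) is the unique minimizer over Zᵢ of (p, q) ↦ Cᵢ(p, q) − α*ᵢ p − β*ᵢ q; and (ii) for every (p, q) ∈ Z₁ × ⋯ × Z_N and every (α, β) ∈ ℝᴺ × ℝᴺ such that v̲ ≤ v̂(p,q) ≤ v̄ and (pᵢ, qᵢ) = bᵢ(αᵢ, βᵢ) for all i, one has F(z*) ≤ F(p, q). In other words, (z*, α*, β*) is a global optimum of the non-convex problem (P2), so the convex relaxation (P3) is exact. -/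
open scoped InnerProductSpace Matrix

/-!
Each agent's incentive cost `Cᵢ(w) − α*ᵢ w₀ − β*ᵢ w₁` has gradient `∇Cᵢ − (α*ᵢ, β*ᵢ)`, and
testing the variational inequality (c) with a point that differs from `z*` only in agent `i`
shows that this gradient makes a nonnegative pairing with every `w − z*ᵢ`, `w ∈ Zᵢ`; by
convexity `z*ᵢ` is a best response, and by strict convexity the only one.

For optimality, the first-order bounds for the convex `Cᵢ` and `D` give
`F(z) − F(z*) ≥ ⟨∇F(z*), z − z*⟩`, which by (c) is at least
`⟨Rᵀμ, p − p*⟩ + ⟨Xᵀμ, q − q*⟩ = ⟨μ, v̂(z) − v̂(z*)⟩` with `μ = μ̲* − μ̄*`. Complementary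
slackness rewrites this as `⟨μ̲*, v̂(z) − v̲⟩ + ⟨μ̄*, v̄ − v̂(z)⟩ ≥ 0` for any `z` satisfying the
voltage bounds.
-/

/-- The voltage map `v̂(p, q) = R p + X q + a`. -/
noncomputable def voltageMap {N : ℕ} (R X : Matrix (Fin N) (Fin N) ℝ)
    (a : EuclideanSpace ℝ (Fin N)) (p q : EuclideanSpace ℝ (Fin N)) :
    EuclideanSpace ℝ (Fin N) :=
  Matrix.toEuclideanLin R p + Matrix.toEuclideanLin X q + a

/-- The social objective `F(p, q) = Σᵢ Cᵢ(pᵢ, qᵢ) + γ D(v̂(p, q))`. -/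
noncomputable def socialObj {N : ℕ} (C : Fin N → EuclideanSpace ℝ (Fin 2) → ℝ)
    (D : EuclideanSpace ℝ (Fin N) → ℝ) (γ : ℝ) (R X : Matrix (Fin N) (Fin N) ℝ)
    (a : EuclideanSpace ℝ (Fin N)) (p q : EuclideanSpace ℝ (Fin N)) : ℝ :=
  (∑ i, C i !₂[p i, q i]) + γ * D (voltageMap R X a p q)

/-- `w` is a minimizer over `Zᵢ` of the incentivized cost `Cᵢ(p,q) − α p − β q`. -/
def IsBestResponse {N : ℕ} (Z : Fin N → Set (EuclideanSpace ℝ (Fin 2)))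
    (C : Fin N → EuclideanSpace ℝ (Fin 2) → ℝ) (i : Fin N) (α β : ℝ)
    (w : EuclideanSpace ℝ (Fin 2)) : Prop :=
  w ∈ Z i ∧ ∀ w' ∈ Z i, C i w - α * w 0 - β * w 1 ≤ C i w' - α * w' 0 - β * w' 1

open Set

theorem ConvexOn.add_inner_le_of_hasGradientAt {E : Type*} [NormedAddCommGroup E]
    [InnerProductSpace ℝ E] [CompleteSpace E] {f : E → ℝ} {g x : E} (hf : ConvexOn ℝ univ f)
    (hg : HasGradientAt f g x) (y : E) : f x + ⟪g, y - x⟫_ℝ ≤ f y := by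
  have hline : ConvexOn ℝ univ (f ∘ AffineMap.lineMap (k := ℝ) x y) := by
    simpa using hf.comp_affineMap (AffineMap.lineMap (k := ℝ) x y)
  have hderiv : HasDerivAt (f ∘ AffineMap.lineMap (k := ℝ) x y) ⟪g, y - x⟫_ℝ 0 := by
    have hg' : HasFDerivAt f (InnerProductSpace.toDual ℝ E g)
        (AffineMap.lineMap x y (0 : ℝ)) := by
      simpa using hasGradientAt_iff_hasFDerivAt.mp hg
    simpa using hg'.comp_hasDerivAt (0 : ℝ) AffineMap.hasDerivAt_lineMap
  have hslope := hline.le_slope_of_hasDerivAt (mem_univ 0) (mem_univ 1) one_pos hderiv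
  simp only [slope_def_field, Function.comp_apply, AffineMap.lineMap_apply_one,
    AffineMap.lineMap_apply_zero, sub_zero, div_one] at hslope
  linarith

theorem ConvexOn.add_sum_mul_le_of_hasGradientAt {ι : Type*} [Fintype ι]
    {f : EuclideanSpace ℝ ι → ℝ} {g x : EuclideanSpace ℝ ι} (hf : ConvexOn ℝ univ f)
    (hg : HasGradientAt f g x) (y : EuclideanSpace ℝ ι) :
    f x + ∑ j, g j * (y j - x j) ≤ f y := by
  simpa [PiLp.inner_apply, mul_comm] using hf.add_inner_le_of_hasGradientAt hg y

theorem ConvexOn.add_mul_add_mul_le_of_hasGradientAt {f : EuclideanSpace ℝ (Fin 2) → ℝ}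
    {g x : EuclideanSpace ℝ (Fin 2)} (hf : ConvexOn ℝ univ f) (hg : HasGradientAt f g x)
    (y : EuclideanSpace ℝ (Fin 2)) :
    f x + g 0 * (y 0 - x 0) + g 1 * (y 1 - x 1) ≤ f y := by
  simpa [Fin.sum_univ_two, add_assoc] using hf.add_sum_mul_le_of_hasGradientAt hg y

theorem sum_toEuclideanLin_transpose_mul {m n : Type*} [Fintype m] [Fintype n] [DecidableEq m]
    [DecidableEq n] (M : Matrix m n ℝ) (u : EuclideanSpace ℝ m) (w : EuclideanSpace ℝ n) :
    ∑ i, Matrix.toEuclideanLin Mᵀ u i * w i = ∑ j, u j * Matrix.toEuclideanLin M w j := by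
  change (Mᵀ *ᵥ u.ofLp) ⬝ᵥ w.ofLp = u.ofLp ⬝ᵥ (M *ᵥ w.ofLp)
  rw [Matrix.mulVec_transpose, Matrix.dotProduct_mulVec]

theorem sum_mul_voltageMap_sub {N : ℕ} (R X : Matrix (Fin N) (Fin N) ℝ)
    (a u p q p₀ q₀ : EuclideanSpace ℝ (Fin N)) :
    ∑ j, u j * (voltageMap R X a p q j - voltageMap R X a p₀ q₀ j)
      = ∑ i, Matrix.toEuclideanLin Rᵀ u i * (p i - p₀ i)
        + ∑ i, Matrix.toEuclideanLin Xᵀ u i * (q i - q₀ i) := by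
  have hR := sum_toEuclideanLin_transpose_mul R u (p - p₀)
  have hX := sum_toEuclideanLin_transpose_mul X u (q - q₀)
  simp only [map_sub, PiLp.sub_apply] at hR hX
  rw [hR, hX, ← Finset.sum_add_distrib]
  simp only [voltageMap, PiLp.add_apply]
  congr 1; ext j; ring

theorem sum_mul_sub_nonneg_of_complementary_slackness {ι : Type*} [Fintype ι]
    {μlo μhi vlo vhi v₀ v : ι → ℝ} (hμlo : ∀ j, 0 ≤ μlo j) (hμhi : ∀ j, 0 ≤ μhi j)
    (hlo : ∑ j, μlo j * (v₀ j - vlo j) = 0) (hhi : ∑ j, μhi j * (vhi j - v₀ j) = 0)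
    (hv : ∀ j, vlo j ≤ v j ∧ v j ≤ vhi j) :
    0 ≤ ∑ j, (μlo j - μhi j) * (v j - v₀ j) := by
  have hsplit : ∑ j, (μlo j - μhi j) * (v j - v₀ j)
      = ∑ j, μlo j * (v j - vlo j) + ∑ j, μhi j * (vhi j - v j)
        - ∑ j, μlo j * (v₀ j - vlo j) - ∑ j, μhi j * (vhi j - v₀ j) := by
    simp only [← Finset.sum_add_distrib, ← Finset.sum_sub_distrib]
    congr 1; ext j; ring
  rw [hsplit, hlo, hhi, sub_zero, sub_zero]
  exact add_nonneg
    (Finset.sum_nonneg fun j _ => mul_nonneg (hμlo j) (sub_nonneg.2 (hv j).1))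
    (Finset.sum_nonneg fun j _ => mul_nonneg (hμhi j) (sub_nonneg.2 (hv j).2))

theorem variationalIneq_factor_of_product {N : ℕ} {Z : Fin N → Set (EuclideanSpace ℝ (Fin 2))}
    {G H : Fin N → ℝ} {p₀ q₀ : EuclideanSpace ℝ (Fin N)}
    (hmem : ∀ i, (!₂[p₀ i, q₀ i] : EuclideanSpace ℝ (Fin 2)) ∈ Z i)
    (hvi : ∀ p q : EuclideanSpace ℝ (Fin N),
      (∀ i, (!₂[p i, q i] : EuclideanSpace ℝ (Fin 2)) ∈ Z i) →
      0 ≤ (∑ i, G i * (p i - p₀ i)) + ∑ i, H i * (q i - q₀ i))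
    (i : Fin N) {w : EuclideanSpace ℝ (Fin 2)} (hw : w ∈ Z i) :
    0 ≤ G i * (w 0 - p₀ i) + H i * (w 1 - q₀ i) := by
  set p := p₀ + WithLp.toLp 2 (Pi.single i (w 0 - p₀ i))
  set q := q₀ + WithLp.toLp 2 (Pi.single i (w 1 - q₀ i))
  have hpq : ∀ j, (!₂[p j, q j] : EuclideanSpace ℝ (Fin 2)) ∈ Z j := by
    intro j
    rcases eq_or_ne j i with rfl | hj
    · convert hw using 1
      ext k; fin_cases k <;> simp [p, q]
    · simpa [p, q, hj] using hmem j
  simpa [p, q, Pi.single_apply] using hvi p q hpq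

theorem isBestResponse_of_variationalIneq {N : ℕ} {Z : Fin N → Set (EuclideanSpace ℝ (Fin 2))}
    {C : Fin N → EuclideanSpace ℝ (Fin 2) → ℝ} {i : Fin N} {α β : ℝ}
    {g w : EuclideanSpace ℝ (Fin 2)} (hC : ConvexOn ℝ univ (C i)) (hg : HasGradientAt (C i) g w)
    (hw : w ∈ Z i) (hvi : ∀ w' ∈ Z i, 0 ≤ (g 0 - α) * (w' 0 - w 0) + (g 1 - β) * (w' 1 - w 1)) :
    IsBestResponse Z C i α β w := by
  refine ⟨hw, fun w' hw' => ?_⟩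
  have := hC.add_mul_add_mul_le_of_hasGradientAt hg w'
  linarith [hvi w' hw']

theorem IsBestResponse.unique {N : ℕ} {Z : Fin N → Set (EuclideanSpace ℝ (Fin 2))}
    {C : Fin N → EuclideanSpace ℝ (Fin 2) → ℝ} {i : Fin N} {α β : ℝ}
    {w w' : EuclideanSpace ℝ (Fin 2)} (hC : StrictConvexOn ℝ univ (C i)) (hZ : Convex ℝ (Z i))
    (hw : IsBestResponse Z C i α β w) (hw' : IsBestResponse Z C i α β w') : w = w' := by
  have hlin : ConvexOn ℝ (Z i) fun v : EuclideanSpace ℝ (Fin 2) => -(α * v 0) - β * v 1 :=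
    ⟨hZ, fun x _ y _ a b _ _ _ => le_of_eq <| by
      simp only [PiLp.add_apply, PiLp.smul_apply, smul_eq_mul]; ring⟩
  have hcost : StrictConvexOn ℝ (Z i) fun v => C i v - α * v 0 - β * v 1 := by
    have hsplit :
        (fun v => C i v - α * v 0 - β * v 1) = C i + fun v => -(α * v 0) - β * v 1 := by
      funext v; simp only [Pi.add_apply]; ring
    rw [hsplit]
    exact (hC.subset (subset_univ _) hZ).add_convexOn hlin
  exact hcost.eq_of_isMinOn (isMinOn_iff.2 hw.2) (isMinOn_iff.2 hw'.2) hw.1 hw'.1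

theorem socialObj_add_sum_le {N : ℕ} {C : Fin N → EuclideanSpace ℝ (Fin 2) → ℝ}
    {D : EuclideanSpace ℝ (Fin N) → ℝ} {γ : ℝ} {R X : Matrix (Fin N) (Fin N) ℝ}
    {a p₀ q₀ : EuclideanSpace ℝ (Fin N)} {gC : Fin N → EuclideanSpace ℝ (Fin 2)}
    {gD : EuclideanSpace ℝ (Fin N)} (hC : ∀ i, ConvexOn ℝ univ (C i))
    (hgC : ∀ i, HasGradientAt (C i) (gC i) !₂[p₀ i, q₀ i]) (hD : ConvexOn ℝ univ D)
    (hgD : HasGradientAt D gD (voltageMap R X a p₀ q₀)) (hγ : 0 ≤ γ)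
    (p q : EuclideanSpace ℝ (Fin N)) :
    socialObj C D γ R X a p₀ q₀
        + (∑ i, (gC i 0 + γ * Matrix.toEuclideanLin Rᵀ gD i) * (p i - p₀ i))
        + (∑ i, (gC i 1 + γ * Matrix.toEuclideanLin Xᵀ gD i) * (q i - q₀ i))
      ≤ socialObj C D γ R X a p q := by
  have hCsum : (∑ i, C i !₂[p₀ i, q₀ i])
        + ∑ i, (gC i 0 * (p i - p₀ i) + gC i 1 * (q i - q₀ i))
      ≤ ∑ i, C i !₂[p i, q i] := by
    rw [← Finset.sum_add_distrib]
    refine Finset.sum_le_sum fun i _ => ?_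
    simpa [add_assoc] using (hC i).add_mul_add_mul_le_of_hasGradientAt (hgC i) !₂[p i, q i]
  have hDlin := hD.add_sum_mul_le_of_hasGradientAt hgD (voltageMap R X a p q)
  rw [sum_mul_voltageMap_sub] at hDlin
  have hγD := mul_le_mul_of_nonneg_left hDlin hγ
  simp only [add_mul, Finset.sum_add_distrib, mul_assoc, ← Finset.mul_sum] at hCsum ⊢
  simp only [socialObj]
  linarith

theorem relaxation_exact_general {N : ℕ}
    (Z : Fin N → Set (EuclideanSpace ℝ (Fin 2)))
    (hZconv : ∀ i, Convex ℝ (Z i))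
    (C : Fin N → EuclideanSpace ℝ (Fin 2) → ℝ)
    (C' : Fin N → EuclideanSpace ℝ (Fin 2) → EuclideanSpace ℝ (Fin 2))
    (hCconv : ∀ i, StrictConvexOn ℝ Set.univ (C i))
    (hC : ∀ i x, HasGradientAt (C i) (C' i x) x)
    (D : EuclideanSpace ℝ (Fin N) → ℝ)
    (D' : EuclideanSpace ℝ (Fin N) → EuclideanSpace ℝ (Fin N))
    (hDconv : ConvexOn ℝ Set.univ D) (hD : ∀ v, HasGradientAt D (D' v) v)
    (γ : ℝ) (hγ : 0 ≤ γ)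
    (R X : Matrix (Fin N) (Fin N) ℝ) (a vlo vhi : EuclideanSpace ℝ (Fin N))
    -- the KKT point of (P3)
    (ps qs : EuclideanSpace ℝ (Fin N)) (μlo μhi : EuclideanSpace ℝ (Fin N))
    (hmem : ∀ i, (!₂[ps i, qs i] : EuclideanSpace ℝ (Fin 2)) ∈ Z i)
    (hμlo : ∀ j, 0 ≤ μlo j) (hμhi : ∀ j, 0 ≤ μhi j)
    -- (b) complementary slackness
    (hcomplo : ∑ j, μlo j * (voltageMap R X a ps qs j - vlo j) = 0)
    (hcomphi : ∑ j, μhi j * (vhi j - voltageMap R X a ps qs j) = 0)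
    -- (c) first-order variational inequality:
    -- ⟨∇ₚF(z*) − Rᵀ(μ̲*−μ̄*), p − p*⟩ + ⟨∇_qF(z*) − Xᵀ(μ̲*−μ̄*), q − q*⟩ ≥ 0
    (hVI : ∀ p q : EuclideanSpace ℝ (Fin N),
      (∀ i, (!₂[p i, q i] : EuclideanSpace ℝ (Fin 2)) ∈ Z i) →
      0 ≤ (∑ i, (C' i !₂[ps i, qs i] 0
              + γ * Matrix.toEuclideanLin Rᵀ (D' (voltageMap R X a ps qs)) i
              - Matrix.toEuclideanLin Rᵀ (μlo - μhi) i) * (p i - ps i))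
         + (∑ i, (C' i !₂[ps i, qs i] 1
              + γ * Matrix.toEuclideanLin Xᵀ (D' (voltageMap R X a ps qs)) i
              - Matrix.toEuclideanLin Xᵀ (μlo - μhi) i) * (q i - qs i))) :
    -- (i) each (p*ᵢ, q*ᵢ) is the unique best response to the incentive signals (α*ᵢ, β*ᵢ)
    (∀ i, IsBestResponse Z C i
        (Matrix.toEuclideanLin Rᵀ (μlo - μhi - γ • D' (voltageMap R X a ps qs)) i)
        (Matrix.toEuclideanLin Xᵀ (μlo - μhi - γ • D' (voltageMap R X a ps qs)) i)
        !₂[ps i, qs i] ∧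
      ∀ w, IsBestResponse Z C i
        (Matrix.toEuclideanLin Rᵀ (μlo - μhi - γ • D' (voltageMap R X a ps qs)) i)
        (Matrix.toEuclideanLin Xᵀ (μlo - μhi - γ • D' (voltageMap R X a ps qs)) i)
        w → w = !₂[ps i, qs i]) ∧
    -- (ii) global optimality among all points feasible for (P2)
    (∀ p q α β : EuclideanSpace ℝ (Fin N),
      (∀ j, vlo j ≤ voltageMap R X a p q j ∧ voltageMap R X a p q j ≤ vhi j) →
      (∀ i, IsBestResponse Z C i (α i) (β i) !₂[p i, q i]) →
      socialObj C D γ R X a ps qs ≤ socialObj C D γ R X a p q) := by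
  have hsignal : ∀ (M : Matrix (Fin N) (Fin N) ℝ) (i : Fin N),
      Matrix.toEuclideanLin Mᵀ (μlo - μhi - γ • D' (voltageMap R X a ps qs)) i
        = Matrix.toEuclideanLin Mᵀ (μlo - μhi) i
          - γ * Matrix.toEuclideanLin Mᵀ (D' (voltageMap R X a ps qs)) i := by
    intro M i
    simp [map_sub, map_smul]
  refine ⟨fun i => ?_, fun p q α β hfeas hbr => ?_⟩
  · refine (fun hbest => ⟨hbest, fun w hw => hw.unique (hCconv i) (hZconv i) hbest⟩) ?_
    refine isBestResponse_of_variationalIneq (hCconv i).convexOn (hC i _) (hmem i) fun w hw => ?_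
    have hagent := variationalIneq_factor_of_product hmem hVI i hw
    simp only [hsignal, Matrix.cons_val_zero, Matrix.cons_val_one]
    linarith
  · have hF := socialObj_add_sum_le (fun i => (hCconv i).convexOn) (fun i => hC i !₂[ps i, qs i])
      hDconv (hD (voltageMap R X a ps qs)) hγ p q
    have hvi := hVI p q fun i => (hbr i).1
    have hμ := sum_mul_voltageMap_sub R X a (μlo - μhi) p q ps qs
    have hslack := sum_mul_sub_nonneg_of_complementary_slackness hμlo hμhi hcomplo hcomphi hfeas
    simp only [sub_mul, Finset.sum_sub_distrib] at hvi
    simp only [PiLp.sub_apply] at hμ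
    linarith

/-- exactness of the convex relaxation (P3) of the non-convex problem (P2):
a KKT point `(p*, q*, μ̲*, μ̄*)` of (P3), together with the incentive signals
`α* = Rᵀ(μ̲* − μ̄* − γ∇D(v̂(z*)))`, `β* = Xᵀ(μ̲* − μ̄* − γ∇D(v̂(z*)))`, satisfies
(i) each `(p*ᵢ, q*ᵢ)` is the unique best response to `(α*ᵢ, β*ᵢ)`, and
(ii) `F(z*) ≤ F(p, q)` for every point feasible for (P2). -/
theorem relaxation_exact {N : ℕ} (hN : 1 ≤ N)
    (Z : Fin N → Set (EuclideanSpace ℝ (Fin 2)))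
    (hZne : ∀ i, (Z i).Nonempty) (hZcomp : ∀ i, IsCompact (Z i))
    (hZconv : ∀ i, Convex ℝ (Z i))
    (C : Fin N → EuclideanSpace ℝ (Fin 2) → ℝ)
    (C' : Fin N → EuclideanSpace ℝ (Fin 2) → EuclideanSpace ℝ (Fin 2))
    (hCconv : ∀ i, StrictConvexOn ℝ Set.univ (C i))
    (hC : ∀ i x, HasGradientAt (C i) (C' i x) x)
    (D : EuclideanSpace ℝ (Fin N) → ℝ)
    (D' : EuclideanSpace ℝ (Fin N) → EuclideanSpace ℝ (Fin N))
    (hDconv : ConvexOn ℝ Set.univ D) (hD : ∀ v, HasGradientAt D (D' v) v)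
    (γ : ℝ) (hγ : 0 ≤ γ)
    (R X : Matrix (Fin N) (Fin N) ℝ) (a vlo vhi : EuclideanSpace ℝ (Fin N))
    -- the KKT point of (P3)
    (ps qs : EuclideanSpace ℝ (Fin N)) (μlo μhi : EuclideanSpace ℝ (Fin N))
    (hmem : ∀ i, (!₂[ps i, qs i] : EuclideanSpace ℝ (Fin 2)) ∈ Z i)
    (hμlo : ∀ j, 0 ≤ μlo j) (hμhi : ∀ j, 0 ≤ μhi j)
    -- (a) primal feasibility: v̲ ≤ v̂(z*) ≤ v̄
    (hfeas : ∀ j, vlo j ≤ voltageMap R X a ps qs j ∧ voltageMap R X a ps qs j ≤ vhi j)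
    -- (b) complementary slackness
    (hcomplo : ∑ j, μlo j * (voltageMap R X a ps qs j - vlo j) = 0)
    (hcomphi : ∑ j, μhi j * (vhi j - voltageMap R X a ps qs j) = 0)
    -- (c) first-order variational inequality:
    -- ⟨∇ₚF(z*) − Rᵀ(μ̲*−μ̄*), p − p*⟩ + ⟨∇_qF(z*) − Xᵀ(μ̲*−μ̄*), q − q*⟩ ≥ 0
    (hVI : ∀ p q : EuclideanSpace ℝ (Fin N),
      (∀ i, (!₂[p i, q i] : EuclideanSpace ℝ (Fin 2)) ∈ Z i) →
      0 ≤ (∑ i, (C' i !₂[ps i, qs i] 0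
              + γ * Matrix.toEuclideanLin Rᵀ (D' (voltageMap R X a ps qs)) i
              - Matrix.toEuclideanLin Rᵀ (μlo - μhi) i) * (p i - ps i))
         + (∑ i, (C' i !₂[ps i, qs i] 1
              + γ * Matrix.toEuclideanLin Xᵀ (D' (voltageMap R X a ps qs)) i
              - Matrix.toEuclideanLin Xᵀ (μlo - μhi) i) * (q i - qs i))) :
    -- (i) each (p*ᵢ, q*ᵢ) is the unique best response to the incentive signals (α*ᵢ, β*ᵢ)
    (∀ i, IsBestResponse Z C i
        (Matrix.toEuclideanLin Rᵀ (μlo - μhi - γ • D' (voltageMap R X a ps qs)) i)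
        (Matrix.toEuclideanLin Xᵀ (μlo - μhi - γ • D' (voltageMap R X a ps qs)) i)
        !₂[ps i, qs i] ∧
      ∀ w, IsBestResponse Z C i
        (Matrix.toEuclideanLin Rᵀ (μlo - μhi - γ • D' (voltageMap R X a ps qs)) i)
        (Matrix.toEuclideanLin Xᵀ (μlo - μhi - γ • D' (voltageMap R X a ps qs)) i)
        w → w = !₂[ps i, qs i]) ∧
    -- (ii) global optimality among all points feasible for (P2)
    (∀ p q α β : EuclideanSpace ℝ (Fin N),
      (∀ j, vlo j ≤ voltageMap R X a p q j ∧ voltageMap R X a p q j ≤ vhi j) →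
      (∀ i, IsBestResponse Z C i (α i) (β i) !₂[p i, q i]) →
      socialObj C D γ R X a ps qs ≤ socialObj C D γ R X a p q) :=
  relaxation_exact_general Z hZconv C C' hCconv hC D D' hDconv hD γ hγ R X a vlo vhi ps qs μlo μhi
    hmem hμlo hμhi hcomplo hcomphi hVI
end

section
/- Assume the gradient of f is c-strongly monotone on Z for some c > 0, i.e. ⟨∇f(x) − ∇f(y), x − y⟩ ≥ c‖x − y‖² for all x, y ∈ Z. Let (z*, μ*) be a saddle point of L over Z × ℝᵐ₊ satisfying the primal feasibility and complementarity conditions g(z*) ≤ 0 (componentwise) and ⟨μ*, g(z*)⟩ = 0, and let (z*_φ, μ*_φ) be a saddle point of L_φ over Z × ℝᵐ₊. Then ‖z*_φ − z*‖² ≤ (φ / (2c)) (‖μ*‖² − ‖μ*_φ‖²). -/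
/-!
Both saddle points satisfy the first-order optimality condition of `L(·, μ)` over `Z`, in which
the convexity of `g` lets its chord between `z*` and `z*_φ` replace its derivative. Adding the two
conditions and using strong monotonicity bounds `c‖z*_φ − z*‖²` by
`⟨μ*, g(z*_φ)⟩ − ⟨μ*_φ, g(z*_φ)⟩ + ⟨μ*_φ, g(z*)⟩ − ⟨μ*, g(z*)⟩`. The last two terms are
nonpositive by feasibility and complementarity, and the first difference is at most
`(φ/2)(‖μ*‖² − ‖μ*_φ‖²)` by the dual half of the regularized saddle inequality at `μ = μ*`.
-/

open scoped InnerProductSpace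

open Set

theorem convexOn_sum_mul_of_nonneg {E ι : Type*} [AddCommGroup E] [Module ℝ E] {s : Set E}
    (hs : Convex ℝ s) (t : Finset ι) {w : ι → ℝ} {g : ι → E → ℝ}
    (hw : ∀ j ∈ t, 0 ≤ w j) (hg : ∀ j ∈ t, ConvexOn ℝ s (g j)) :
    ConvexOn ℝ s fun z => ∑ j ∈ t, w j * g j z := by
  induction t using Finset.cons_induction with
  | empty => simpa using convexOn_const (0 : ℝ) hs
  | cons j t _ ih =>
    simp only [Finset.sum_cons]
    have hj_conv := (hg j (Finset.mem_cons_self j t)).smul (hw j (Finset.mem_cons_self j t))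
    exact hj_conv.add (ih (fun i hi => hw i (Finset.mem_cons_of_mem hi))
      (fun i hi => hg i (Finset.mem_cons_of_mem hi)))

/-- Bounding `k` by its chord on `[x, y]` leaves a differentiable function of the segment
parameter that is minimized at `0`. -/
theorem IsMinOn.hasFDerivAt_add_convexOn_nonneg {E : Type*} [NormedAddCommGroup E]
    [NormedSpace ℝ E] {f k : E → ℝ} {f' : E →L[ℝ] ℝ} {s : Set E} {x y : E}
    (hmin : IsMinOn (f + k) s x) (hf : HasFDerivAt f f' x) (hk : ConvexOn ℝ s k)
    (hx : x ∈ s) (hy : y ∈ s) : 0 ≤ f' (y - x) + (k y - k x) := by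
  set ψ : ℝ → ℝ := fun t => f (x + t • (y - x)) + t * (k y - k x)
  have hψ_min : IsMinOn ψ (Icc 0 1) 0 := by
    intro t ⟨ht0, ht1⟩
    have hpt : x + t • (y - x) = (1 - t) • x + t • y := by module
    have hmem : x + t • (y - x) ∈ s := hpt ▸ hk.1 hx hy (sub_nonneg.2 ht1) ht0 (by ring)
    have hchord : k (x + t • (y - x)) ≤ k x + t * (k y - k x) := by
      have := hk.2 hx hy (sub_nonneg.2 ht1) ht0 (by ring)
      rw [hpt]
      simp only [smul_eq_mul] at this
      linarith
    have hmin_t : f x + k x ≤ f (x + t • (y - x)) + k (x + t • (y - x)) := hmin hmem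
    show ψ 0 ≤ ψ t
    simp only [ψ, zero_smul, add_zero, zero_mul]
    linarith
  have hψ_deriv : HasDerivAt ψ (f' (y - x) + (k y - k x)) 0 := by
    have hline : HasDerivAt (fun t : ℝ => x + t • (y - x)) (y - x) 0 := by
      simpa using ((hasDerivAt_id (0 : ℝ)).smul_const (y - x)).const_add x
    have hf0 : HasFDerivAt f f' (x + (0 : ℝ) • (y - x)) := by simpa using hf
    have h := (hf0.comp_hasDerivAt 0 hline).add ((hasDerivAt_id (0 : ℝ)).mul_const (k y - k x))
    rw [one_mul] at h
    exact h
  have hone : (1 : ℝ) ∈ posTangentConeAt (Icc 0 1) 0 :=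
    mem_posTangentConeAt_of_segment_subset (by simp [segment_eq_Icc])
  simpa using IsLocalMinOn.hasFDerivWithinAt_nonneg hψ_min.localize
    hψ_deriv.hasFDerivAt.hasFDerivWithinAt hone

theorem IsMinOn.hasGradientAt_add_convexOn_nonneg {E : Type*} [NormedAddCommGroup E]
    [InnerProductSpace ℝ E] [CompleteSpace E] {f k : E → ℝ} {f' : E} {s : Set E} {x y : E}
    (hmin : IsMinOn (f + k) s x) (hf : HasGradientAt f f' x) (hk : ConvexOn ℝ s k)
    (hx : x ∈ s) (hy : y ∈ s) : 0 ≤ ⟪f', y - x⟫_ℝ + (k y - k x) := by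
  simpa using hmin.hasFDerivAt_add_convexOn_nonneg hf.hasFDerivAt hk hx hy

theorem regularization_discrepancy_general {n m : ℕ}
    (Z : Set (EuclideanSpace ℝ (Fin n)))
    (hZconv : Convex ℝ Z)
    (f : EuclideanSpace ℝ (Fin n) → ℝ)
    (f' : EuclideanSpace ℝ (Fin n) → EuclideanSpace ℝ (Fin n))
    (hf : ∀ x, HasGradientAt f (f' x) x)
    (g : EuclideanSpace ℝ (Fin n) → EuclideanSpace ℝ (Fin m))
    (hgconv : ∀ j, ConvexOn ℝ Set.univ (fun z => g z j))
    (φ c : ℝ) (hc : 0 < c)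
    -- ∇f is c-strongly monotone on Z
    (hmono : ∀ x ∈ Z, ∀ y ∈ Z, c * ‖x - y‖ ^ 2 ≤ ⟪f' x - f' y, x - y⟫_ℝ)
    -- (z*, μ*): saddle point of L over Z × ℝᵐ₊, primal feasible and complementary
    (zs : EuclideanSpace ℝ (Fin n)) (μs : EuclideanSpace ℝ (Fin m))
    (hzs : zs ∈ Z) (hμs : ∀ j, 0 ≤ μs j)
    (hsaddle : ∀ z ∈ Z, ∀ μ : EuclideanSpace ℝ (Fin m), (∀ j, 0 ≤ μ j) →
      f zs + ∑ j, μ j * g zs j ≤ f zs + ∑ j, μs j * g zs j ∧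
      f zs + ∑ j, μs j * g zs j ≤ f z + ∑ j, μs j * g z j)
    (hfeas : ∀ j, g zs j ≤ 0)
    (hcomp : ∑ j, μs j * g zs j = 0)
    -- (z*_φ, μ*_φ): saddle point of L_φ over Z × ℝᵐ₊
    (zφ : EuclideanSpace ℝ (Fin n)) (μφ : EuclideanSpace ℝ (Fin m))
    (hzφ : zφ ∈ Z) (hμφ : ∀ j, 0 ≤ μφ j)
    (hsaddleφ : ∀ z ∈ Z, ∀ μ : EuclideanSpace ℝ (Fin m), (∀ j, 0 ≤ μ j) →
      f zφ + (∑ j, μ j * g zφ j) - φ / 2 * ‖μ‖ ^ 2 ≤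
        f zφ + (∑ j, μφ j * g zφ j) - φ / 2 * ‖μφ‖ ^ 2 ∧
      f zφ + (∑ j, μφ j * g zφ j) - φ / 2 * ‖μφ‖ ^ 2 ≤
        f z + (∑ j, μφ j * g z j) - φ / 2 * ‖μφ‖ ^ 2) :
    ‖zφ - zs‖ ^ 2 ≤ φ / (2 * c) * (‖μs‖ ^ 2 - ‖μφ‖ ^ 2) := by
  have hpenalty_conv : ∀ μ : EuclideanSpace ℝ (Fin m), (∀ j, 0 ≤ μ j) →
      ConvexOn ℝ Z fun z => ∑ j, μ j * g z j := fun μ hμ =>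
    convexOn_sum_mul_of_nonneg hZconv _ (fun j _ => hμ j)
      (fun j _ => (hgconv j).subset (subset_univ Z) hZconv)
  have hopt_s := IsMinOn.hasGradientAt_add_convexOn_nonneg (hk := hpenalty_conv μs hμs)
    (isMinOn_iff.2 fun z hz => (hsaddle z hz μs hμs).2) (hf zs) hzs hzφ
  have hopt_φ := IsMinOn.hasGradientAt_add_convexOn_nonneg (hk := hpenalty_conv μφ hμφ)
    (isMinOn_iff.2 fun z hz => (sub_le_sub_iff_right _).1 (hsaddleφ z hz μφ hμφ).2)
    (hf zφ) hzφ hzs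
  have hdual := (hsaddleφ zs hzs μs hμs).1
  have hfeas_φ : ∑ j, μφ j * g zs j ≤ 0 :=
    Finset.sum_nonpos fun j _ => mul_nonpos_of_nonneg_of_nonpos (hμφ j) (hfeas j)
  have hstrong := hmono zφ hzφ zs hzs
  rw [inner_sub_left] at hstrong
  rw [← neg_sub zφ zs, inner_neg_right] at hopt_φ
  have hkey : c * ‖zφ - zs‖ ^ 2 ≤ φ / 2 * (‖μs‖ ^ 2 - ‖μφ‖ ^ 2) := by linarith
  calc ‖zφ - zs‖ ^ 2 = c * ‖zφ - zs‖ ^ 2 / c := by field_simp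
    _ ≤ φ / 2 * (‖μs‖ ^ 2 - ‖μφ‖ ^ 2) / c := by gcongr
    _ = φ / (2 * c) * (‖μs‖ ^ 2 - ‖μφ‖ ^ 2) := by ring

/-- discrepancy bound between the saddle point of the Lagrangian
`L(z,μ) = f(z) + ⟨μ, g(z)⟩` and of the regularized Lagrangian
`L_φ(z,μ) = L(z,μ) − (φ/2)‖μ‖²` over `Z × ℝᵐ₊`:
`‖z*_φ − z*‖² ≤ (φ/(2c)) (‖μ*‖² − ‖μ*_φ‖²)`. -/
theorem regularization_discrepancy {n m : ℕ}
    (Z : Set (EuclideanSpace ℝ (Fin n)))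
    (hZne : Z.Nonempty) (hZcomp : IsCompact Z) (hZconv : Convex ℝ Z)
    (f : EuclideanSpace ℝ (Fin n) → ℝ)
    (f' : EuclideanSpace ℝ (Fin n) → EuclideanSpace ℝ (Fin n))
    (hf : ∀ x, HasGradientAt f (f' x) x)
    (g : EuclideanSpace ℝ (Fin n) → EuclideanSpace ℝ (Fin m))
    (hgdiff : ∀ j, Differentiable ℝ (fun z => g z j))
    (hgconv : ∀ j, ConvexOn ℝ Set.univ (fun z => g z j))
    (φ c : ℝ) (hφ : 0 < φ) (hc : 0 < c)
    -- ∇f is c-strongly monotone on Z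
    (hmono : ∀ x ∈ Z, ∀ y ∈ Z, c * ‖x - y‖ ^ 2 ≤ ⟪f' x - f' y, x - y⟫_ℝ)
    -- (z*, μ*): saddle point of L over Z × ℝᵐ₊, primal feasible and complementary
    (zs : EuclideanSpace ℝ (Fin n)) (μs : EuclideanSpace ℝ (Fin m))
    (hzs : zs ∈ Z) (hμs : ∀ j, 0 ≤ μs j)
    (hsaddle : ∀ z ∈ Z, ∀ μ : EuclideanSpace ℝ (Fin m), (∀ j, 0 ≤ μ j) →
      f zs + ∑ j, μ j * g zs j ≤ f zs + ∑ j, μs j * g zs j ∧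
      f zs + ∑ j, μs j * g zs j ≤ f z + ∑ j, μs j * g z j)
    (hfeas : ∀ j, g zs j ≤ 0)
    (hcomp : ∑ j, μs j * g zs j = 0)
    -- (z*_φ, μ*_φ): saddle point of L_φ over Z × ℝᵐ₊
    (zφ : EuclideanSpace ℝ (Fin n)) (μφ : EuclideanSpace ℝ (Fin m))
    (hzφ : zφ ∈ Z) (hμφ : ∀ j, 0 ≤ μφ j)
    (hsaddleφ : ∀ z ∈ Z, ∀ μ : EuclideanSpace ℝ (Fin m), (∀ j, 0 ≤ μ j) →
      f zφ + (∑ j, μ j * g zφ j) - φ / 2 * ‖μ‖ ^ 2 ≤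
        f zφ + (∑ j, μφ j * g zφ j) - φ / 2 * ‖μφ‖ ^ 2 ∧
      f zφ + (∑ j, μφ j * g zφ j) - φ / 2 * ‖μφ‖ ^ 2 ≤
        f z + (∑ j, μφ j * g z j) - φ / 2 * ‖μφ‖ ^ 2) :
    ‖zφ - zs‖ ^ 2 ≤ φ / (2 * c) * (‖μs‖ ^ 2 - ‖μφ‖ ^ 2) :=
  regularization_discrepancy_general Z hZconv f f' hf g hgconv φ c hc hmono zs μs hzs hμs hsaddle
    hfeas hcomp zφ μφ hzφ hμφ hsaddleφ
end

section
/- For the online iterates yₘ := Tₘᴷ(yₘ₋₁), the tracking error satisfies limsup_{m→∞} ‖yₘ − y*ₘ‖ ≤ ρ/(1 − Δ) + σ Δᴷ/(1 − Δᴷ). -/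
/-!
Each perturbed map `Tₘ` moves a point to within `Δ · (distance to y*ₘ) + ρ` of `y*ₘ`, so `K`
steps of it contract the distance by `Δᴷ` up to an error `ρ (1 + Δ + ⋯ + Δᴷ⁻¹)`. Since the target
moves by at most `σ`, the tracking error `eₘ = ‖yₘ − y*ₘ‖` obeys
`eₘ₊₁ ≤ Δᴷ eₘ + Δᴷ σ + ρ (1 − Δᴷ)/(1 − Δ)`, and any affine recursion
`aₙ₊₁ ≤ c aₙ + d` with `0 ≤ c < 1` has `limsup aₙ ≤ d / (1 − c)`.
-/

open Filter Finset Topology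

lemma le_pow_mul_add_mul_geom_sum {a : ℕ → ℝ} {c d : ℝ} (hc : 0 ≤ c)
    (h : ∀ n, a (n + 1) ≤ c * a n + d) (n : ℕ) :
    a n ≤ c ^ n * a 0 + d * ∑ i ∈ range n, c ^ i := by
  induction n with
  | zero => simp
  | succ n ih =>
    calc a (n + 1) ≤ c * a n + d := h n
      _ ≤ c * (c ^ n * a 0 + d * ∑ i ∈ range n, c ^ i) + d := by gcongr
      _ = c ^ (n + 1) * a 0 + d * ∑ i ∈ range (n + 1), c ^ i := by rw [geom_sum_succ]; ring

lemma limsup_le_div_one_sub_of_le_mul_add {a : ℕ → ℝ} {c d : ℝ} (hc₀ : 0 ≤ c) (hc₁ : c < 1)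
    (ha : IsBoundedUnder (· ≥ ·) atTop a) (h : ∀ n, a (n + 1) ≤ c * a n + d) :
    limsup a atTop ≤ d / (1 - c) := by
  have hbound : Tendsto (fun n => c ^ n * a 0 + d * ∑ i ∈ range n, c ^ i) atTop
      (𝓝 (0 * a 0 + d * (1 - c)⁻¹)) :=
    ((tendsto_pow_atTop_nhds_zero_of_lt_one hc₀ hc₁).mul_const _).add
      ((hasSum_geometric_of_lt_one hc₀ hc₁).tendsto_sum_nat.const_mul d)
  calc limsup a atTop
      ≤ limsup (fun n => c ^ n * a 0 + d * ∑ i ∈ range n, c ^ i) atTop :=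
        limsup_le_limsup (.of_forall (le_pow_mul_add_mul_geom_sum hc₀ h))
          ha.isCoboundedUnder_le hbound.isBoundedUnder_le
    _ = d / (1 - c) := by rw [hbound.limsup_eq]; ring

section PerturbedContraction

variable {X : Type*} [PseudoMetricSpace X] {Δ ρ : ℝ} {T F : X → X} {x₀ : X}

lemma dist_apply_le_mul_add_of_near_contraction
    (hcontr : ∀ x x', dist (F x) (F x') ≤ Δ * dist x x') (hfix : F x₀ = x₀)
    (hT : ∀ x, dist (T x) (F x) ≤ ρ) (x : X) :
    dist (T x) x₀ ≤ Δ * dist x x₀ + ρ :=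
  calc dist (T x) x₀ ≤ dist (T x) (F x) + dist (F x) (F x₀) := by
        rw [hfix]; exact dist_triangle _ _ _
    _ ≤ ρ + Δ * dist x x₀ := add_le_add (hT x) (hcontr x x₀)
    _ = Δ * dist x x₀ + ρ := add_comm _ _

lemma dist_iterate_le_pow_mul_add_of_near_contraction (hΔ : 0 ≤ Δ)
    (hcontr : ∀ x x', dist (F x) (F x') ≤ Δ * dist x x')
    (hfix : F x₀ = x₀) (hT : ∀ x, dist (T x) (F x) ≤ ρ) (n : ℕ) (x : X) :
    dist (T^[n] x) x₀ ≤ Δ ^ n * dist x x₀ + ρ * ∑ i ∈ range n, Δ ^ i := by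
  simpa using le_pow_mul_add_mul_geom_sum (a := fun k => dist (T^[k] x) x₀) hΔ
    (fun k => by
      simpa only [Function.iterate_succ_apply'] using
        dist_apply_le_mul_add_of_near_contraction hcontr hfix hT (T^[k] x)) n

end PerturbedContraction

theorem online_tracking_limsup_general {Y : Type*} [NormedAddCommGroup Y]
    (Δ ρ σ : ℝ) (hΔ0 : 0 ≤ Δ) (hΔ1 : Δ < 1)
    (K : ℕ) (hK : 1 ≤ K)
    (That T : ℕ → Y → Y) (ys : ℕ → Y)
    (hcontr : ∀ m (y y' : Y), ‖That m y - That m y'‖ ≤ Δ * ‖y - y'‖)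
    (hfix : ∀ m, That m (ys m) = ys m)
    (hT : ∀ m y, ‖T m y - That m y‖ ≤ ρ)
    (hdrift : ∀ m, ‖ys (m + 1) - ys m‖ ≤ σ)
    (y : ℕ → Y) (hy : ∀ m, y (m + 1) = (T (m + 1))^[K] (y m)) :
    Filter.limsup (fun m => ‖y m - ys m‖) Filter.atTop ≤
      ρ / (1 - Δ) + σ * Δ ^ K / (1 - Δ ^ K) := by
  simp only [← dist_eq_norm] at hcontr hT hdrift ⊢
  have hΔK : Δ ^ K < 1 := pow_lt_one₀ hΔ0 hΔ1 (by omega)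
  have hrec : ∀ m, dist (y (m + 1)) (ys (m + 1)) ≤
      Δ ^ K * dist (y m) (ys m) + (Δ ^ K * σ + ρ * ∑ i ∈ range K, Δ ^ i) := fun m =>
    calc dist (y (m + 1)) (ys (m + 1))
        ≤ Δ ^ K * dist (y m) (ys (m + 1)) + ρ * ∑ i ∈ range K, Δ ^ i := by
          rw [hy]
          exact dist_iterate_le_pow_mul_add_of_near_contraction hΔ0 (hcontr _) (hfix _) (hT _) K _
      _ ≤ Δ ^ K * (dist (y m) (ys m) + σ) + ρ * ∑ i ∈ range K, Δ ^ i := by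
          gcongr
          linarith [dist_triangle (y m) (ys m) (ys (m + 1)), dist_comm (ys m) (ys (m + 1)),
            hdrift m]
      _ = _ := by ring
  calc limsup (fun m => dist (y m) (ys m)) atTop
      ≤ (Δ ^ K * σ + ρ * ∑ i ∈ range K, Δ ^ i) / (1 - Δ ^ K) :=
        limsup_le_div_one_sub_of_le_mul_add (pow_nonneg hΔ0 K) hΔK
          (isBoundedUnder_of_eventually_ge (.of_forall fun _ => dist_nonneg)) hrec
    _ = ρ / (1 - Δ) + σ * Δ ^ K / (1 - Δ ^ K) := by
      have hgeom := geom_sum_mul_neg Δ K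
      have h1Δ : 1 - Δ ≠ 0 := by linarith
      have hsum : ∑ i ∈ range K, Δ ^ i ≠ 0 := left_ne_zero_of_mul (by rw [hgeom]; linarith)
      rw [← hgeom]
      field_simp
      ring

/-- asymptotic tracking bound for the online iterates `yₘ = Tₘᴷ(yₘ₋₁)`:
`limsup_{m→∞} ‖yₘ − y*ₘ‖ ≤ ρ/(1 − Δ) + σ Δᴷ/(1 − Δᴷ)`. -/
theorem online_tracking_limsup {Y : Type*} [NormedAddCommGroup Y] [NormedSpace ℝ Y]
    (Δ ρ σ : ℝ) (hΔ0 : 0 ≤ Δ) (hΔ1 : Δ < 1) (hρ : 0 ≤ ρ) (hσ : 0 ≤ σ)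
    (K : ℕ) (hK : 1 ≤ K)
    (That T : ℕ → Y → Y) (ys : ℕ → Y)
    (hcontr : ∀ m (y y' : Y), ‖That m y - That m y'‖ ≤ Δ * ‖y - y'‖)
    (hfix : ∀ m, That m (ys m) = ys m)
    (hT : ∀ m y, ‖T m y - That m y‖ ≤ ρ)
    (hdrift : ∀ m, ‖ys (m + 1) - ys m‖ ≤ σ)
    (y : ℕ → Y) (hy : ∀ m, y (m + 1) = (T (m + 1))^[K] (y m)) :
    Filter.limsup (fun m => ‖y m - ys m‖) Filter.atTop ≤
      ρ / (1 - Δ) + σ * Δ ^ K / (1 - Δ ^ K) :=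
  online_tracking_limsup_general Δ ρ σ hΔ0 hΔ1 K hK That T ys hcontr hfix hT hdrift y hy
end

section
/- In the case K = 1, the online iterates yₘ := Tₘ(yₘ₋₁) satisfy limsup_{m→∞} ‖yₘ − y*ₘ‖ ≤ (ρ + σΔ)/(1 − Δ). -/
/-!
The tracking error `eₘ := ‖yₘ − y*ₘ‖` obeys the affine recursion `eₘ₊₁ ≤ Δ eₘ + (ρ + σΔ)`:
one step of `Tₘ₊₁` is within `ρ` of the `Δ`-contraction `T̂ₘ₊₁`, which moves `yₘ` towards its
fixed point `y*ₘ₊₁`, and `‖yₘ − y*ₘ₊₁‖ ≤ eₘ + σ`. An affine recursion with slope `Δ < 1` forgets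
its initial value geometrically fast, so its limsup is at most its fixed point `(ρ + σΔ)/(1 − Δ)`.
-/

open Filter Topology

theorem le_pow_mul_sub_add_of_le_mul_add {a : ℕ → ℝ} {Δ b C : ℝ} (hΔ : 0 ≤ Δ)
    (hC : Δ * C + b = C) (h : ∀ n, a (n + 1) ≤ Δ * a n + b) (n : ℕ) :
    a n ≤ Δ ^ n * (a 0 - C) + C := by
  induction n with
  | zero => simp
  | succ n ih =>
    calc a (n + 1) ≤ Δ * a n + b := h n
      _ ≤ Δ * (Δ ^ n * (a 0 - C) + C) + b := by gcongr
      _ = Δ ^ (n + 1) * (a 0 - C) + C := by linear_combination hC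

theorem limsup_le_div_one_sub_of_le_mul_add_s6 {a : ℕ → ℝ} {Δ b : ℝ} (hΔ0 : 0 ≤ Δ) (hΔ1 : Δ < 1)
    (hbdd : IsBoundedUnder (· ≥ ·) atTop a) (h : ∀ n, a (n + 1) ≤ Δ * a n + b) :
    limsup a atTop ≤ b / (1 - Δ) := by
  set C := b / (1 - Δ)
  have hC : Δ * C + b = C := by
    have : 1 - Δ ≠ 0 := by linarith
    simp only [C]
    field_simp
    ring
  have hlim : Tendsto (fun n => Δ ^ n * (a 0 - C) + C) atTop (𝓝 C) := by
    simpa using ((tendsto_pow_atTop_nhds_zero_of_lt_one hΔ0 hΔ1).mul_const (a 0 - C)).add_const C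
  calc limsup a atTop ≤ limsup (fun n => Δ ^ n * (a 0 - C) + C) atTop :=
        limsup_le_limsup (.of_forall (le_pow_mul_sub_add_of_le_mul_add hΔ0 hC h))
          hbdd.isCoboundedUnder_le hlim.isBoundedUnder_le
    _ = C := hlim.limsup_eq

theorem norm_sub_fixedPoint_le_of_norm_sub_le {Y : Type*} [SeminormedAddCommGroup Y]
    {f g : Y → Y} {Δ ρ : ℝ} {p x : Y} (hf : ∀ u v, ‖f u - f v‖ ≤ Δ * ‖u - v‖) (hp : f p = p)
    (hg : ‖g x - f x‖ ≤ ρ) :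
    ‖g x - p‖ ≤ ρ + Δ * ‖x - p‖ :=
  calc ‖g x - p‖ ≤ ‖g x - f x‖ + ‖f x - f p‖ := by
        rw [hp]; exact norm_sub_le_norm_sub_add_norm_sub _ _ _
    _ ≤ ρ + Δ * ‖x - p‖ := add_le_add hg (hf x p)

theorem online_tracking_limsup_K_one_general {Y : Type*} [NormedAddCommGroup Y]
    (Δ ρ σ : ℝ) (hΔ0 : 0 ≤ Δ) (hΔ1 : Δ < 1)
    (That T : ℕ → Y → Y) (ys : ℕ → Y)
    (hcontr : ∀ m (y y' : Y), ‖That m y - That m y'‖ ≤ Δ * ‖y - y'‖)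
    (hfix : ∀ m, That m (ys m) = ys m)
    (hT : ∀ m y, ‖T m y - That m y‖ ≤ ρ)
    (hdrift : ∀ m, ‖ys (m + 1) - ys m‖ ≤ σ)
    (y : ℕ → Y) (hy : ∀ m, y (m + 1) = T (m + 1) (y m)) :
    Filter.limsup (fun m => ‖y m - ys m‖) Filter.atTop ≤ (ρ + σ * Δ) / (1 - Δ) := by
  refine limsup_le_div_one_sub_of_le_mul_add_s6 hΔ0 hΔ1
    (isBoundedUnder_of ⟨0, fun m => norm_nonneg _⟩) fun m => ?_
  have hmoved : ‖y m - ys (m + 1)‖ ≤ ‖y m - ys m‖ + σ :=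
    calc ‖y m - ys (m + 1)‖ ≤ ‖y m - ys m‖ + ‖ys (m + 1) - ys m‖ := by
          rw [norm_sub_rev (ys (m + 1))]; exact norm_sub_le_norm_sub_add_norm_sub _ _ _
      _ ≤ ‖y m - ys m‖ + σ := by gcongr; exact hdrift m
  calc ‖y (m + 1) - ys (m + 1)‖ ≤ ρ + Δ * ‖y m - ys (m + 1)‖ := by
        rw [hy m]
        exact norm_sub_fixedPoint_le_of_norm_sub_le (hcontr _) (hfix _) (hT _ _)
    _ ≤ ρ + Δ * (‖y m - ys m‖ + σ) := by gcongr
    _ = Δ * ‖y m - ys m‖ + (ρ + σ * Δ) := by ring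

/-- asymptotic tracking bound for the online iterates in the case `K = 1`,
`yₘ = Tₘ(yₘ₋₁)`: `limsup_{m→∞} ‖yₘ − y*ₘ‖ ≤ (ρ + σΔ)/(1 − Δ)`. -/
theorem online_tracking_limsup_K_one {Y : Type*} [NormedAddCommGroup Y] [NormedSpace ℝ Y]
    (Δ ρ σ : ℝ) (hΔ0 : 0 ≤ Δ) (hΔ1 : Δ < 1) (hρ : 0 ≤ ρ) (hσ : 0 ≤ σ)
    (That T : ℕ → Y → Y) (ys : ℕ → Y)
    (hcontr : ∀ m (y y' : Y), ‖That m y - That m y'‖ ≤ Δ * ‖y - y'‖)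
    (hfix : ∀ m, That m (ys m) = ys m)
    (hT : ∀ m y, ‖T m y - That m y‖ ≤ ρ)
    (hdrift : ∀ m, ‖ys (m + 1) - ys m‖ ≤ σ)
    (y : ℕ → Y) (hy : ∀ m, y (m + 1) = T (m + 1) (y m)) :
    Filter.limsup (fun m => ‖y m - ys m‖) Filter.atTop ≤ (ρ + σ * Δ) / (1 - Δ) :=
  online_tracking_limsup_K_one_general Δ ρ σ hΔ0 hΔ1 That T ys hcontr hfix hT hdrift y hy
end

section
/- Let z*, z*_φ ∈ Z and μ*_φ ∈ ℝᵐ₊. Assume g(z*) ≤ 0 componentwise, and assume the first-order optimality condition ⟨∇f(z*_φ) + Σⱼ (μ*_φ)ⱼ ∇gⱼ(z*_φ), z − z*_φ⟩ ≥ 0 for all z ∈ Z. Then ⟨μ*_φ, g(z*_φ)⟩ ≤ −⟨∇f(z*_φ), z*_φ − z*⟩. -/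
open scoped InnerProductSpace

/-!
Convexity of each `gⱼ` gives `gⱼ(z*_φ) + ⟨∇gⱼ(z*_φ), z* − z*_φ⟩ ≤ gⱼ(z*) ≤ 0`. Weighting by
`(μ*_φ)ⱼ ≥ 0` and summing, `⟨μ*_φ, g(z*_φ)⟩ ≤ ⟨Σⱼ (μ*_φ)ⱼ ∇gⱼ(z*_φ), z*_φ − z*⟩`, and the
optimality condition tested at `z = z*` bounds the right side by `−⟨∇f(z*_φ), z*_φ − z*⟩`.
-/

section FirstOrderConvexity

variable {E : Type*} [NormedAddCommGroup E] {s : Set E} {h : E → ℝ} {x y : E}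

theorem ConvexOn.add_fderiv_sub_le [NormedSpace ℝ E] {h' : E →L[ℝ] ℝ} (hc : ConvexOn ℝ s h)
    (hx : x ∈ s) (hy : y ∈ s) (hd : HasFDerivAt h h' x) : h x + h' (y - x) ≤ h y := by
  set p : ℝ → ℝ := h ∘ AffineMap.lineMap x y
  have hp : ConvexOn ℝ (Set.Icc 0 1) p :=
    (hc.comp_affineMap (AffineMap.lineMap x y)).subset
      (fun t ht => hc.1.lineMap_mem hx hy ⟨ht.1, ht.2⟩) (convex_Icc 0 1)
  have hline : HasDerivAt (fun t : ℝ => AffineMap.lineMap x y t) (y - x) 0 := by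
    simpa [AffineMap.lineMap_apply_module'] using
      ((hasDerivAt_id (0 : ℝ)).smul_const (y - x)).add_const x
  have hd' : HasDerivAt p (h' (y - x)) 0 := by
    refine HasFDerivAt.comp_hasDerivAt (0 : ℝ) ?_ hline
    simpa using hd
  have hslope := hp.le_slope_of_hasDerivAt (by simp) (by simp) one_pos hd'
  simp only [slope_def_field, p, Function.comp, AffineMap.lineMap_apply_zero,
    AffineMap.lineMap_apply_one, sub_zero, div_one] at hslope
  linarith

theorem ConvexOn.add_inner_gradient_sub_le [InnerProductSpace ℝ E] [CompleteSpace E] {h' : E}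
    (hc : ConvexOn ℝ s h) (hx : x ∈ s) (hy : y ∈ s) (hd : HasGradientAt h h' x) :
    h x + ⟪h', y - x⟫_ℝ ≤ h y := by
  simpa using hc.add_fderiv_sub_le hx hy hd.hasFDerivAt

theorem sum_mul_add_inner_sum_smul_gradient_le [InnerProductSpace ℝ E] [CompleteSpace E]
    {ι : Type*} [Fintype ι] {g : ι → E → ℝ} {g' : ι → E} {μ : ι → ℝ} (hμ : ∀ j, 0 ≤ μ j)
    (hc : ∀ j, ConvexOn ℝ s (g j)) (hx : x ∈ s) (hy : y ∈ s)
    (hd : ∀ j, HasGradientAt (g j) (g' j) x) :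
    ∑ j, μ j * g j x + ⟪∑ j, μ j • g' j, y - x⟫_ℝ ≤ ∑ j, μ j * g j y := by
  rw [sum_inner, ← Finset.sum_add_distrib]
  refine Finset.sum_le_sum fun j _ => ?_
  rw [real_inner_smul_left, ← mul_add]
  exact mul_le_mul_of_nonneg_left ((hc j).add_inner_gradient_sub_le hx hy (hd j)) (hμ j)

end FirstOrderConvexity

theorem regularized_multiplier_ineq_general {n m : ℕ}
    (Z : Set (EuclideanSpace ℝ (Fin n)))
    (f' : EuclideanSpace ℝ (Fin n) → EuclideanSpace ℝ (Fin n))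
    (g : EuclideanSpace ℝ (Fin n) → EuclideanSpace ℝ (Fin m))
    (g' : Fin m → EuclideanSpace ℝ (Fin n) → EuclideanSpace ℝ (Fin n))
    (hg : ∀ j x, HasGradientAt (fun z => g z j) (g' j x) x)
    (hgconv : ∀ j, ConvexOn ℝ Set.univ (fun z => g z j))
    (zs zφ : EuclideanSpace ℝ (Fin n)) (hzs : zs ∈ Z)
    (μφ : EuclideanSpace ℝ (Fin m)) (hμφ : ∀ j, 0 ≤ μφ j)
    (hfeas : ∀ j, g zs j ≤ 0)
    (hopt : ∀ z ∈ Z, 0 ≤ ⟪f' zφ + ∑ j, μφ j • g' j zφ, z - zφ⟫_ℝ) :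
    ∑ j, μφ j * g zφ j ≤ -⟪f' zφ, zφ - zs⟫_ℝ := by
  have hconv := sum_mul_add_inner_sum_smul_gradient_le (g := fun j z => g z j) hμφ hgconv
    (Set.mem_univ zφ) (Set.mem_univ zs) (fun j => hg j zφ)
  have hfeas_sum : ∑ j, μφ j * g zs j ≤ 0 :=
    Finset.sum_nonpos fun j _ => mul_nonpos_of_nonneg_of_nonpos (hμφ j) (hfeas j)
  have hopt_zs := hopt zs hzs
  rw [inner_add_left] at hopt_zs
  have hflip : ⟪f' zφ, zφ - zs⟫_ℝ = -⟪f' zφ, zs - zφ⟫_ℝ := by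
    rw [← inner_neg_right, neg_sub]
  linarith

/-- at a point `z*_φ` satisfying the first-order optimality condition of the
regularized Lagrangian with multiplier `μ*_φ ≥ 0`, and for any `z* ∈ Z` with `g(z*) ≤ 0`,
one has `⟨μ*_φ, g(z*_φ)⟩ ≤ −⟨∇f(z*_φ), z*_φ − z*⟩`. -/
theorem regularized_multiplier_ineq {n m : ℕ}
    (Z : Set (EuclideanSpace ℝ (Fin n)))
    (hZne : Z.Nonempty) (hZcomp : IsCompact Z) (hZconv : Convex ℝ Z)
    (f : EuclideanSpace ℝ (Fin n) → ℝ)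
    (f' : EuclideanSpace ℝ (Fin n) → EuclideanSpace ℝ (Fin n))
    (hf : ∀ x, HasGradientAt f (f' x) x)
    (g : EuclideanSpace ℝ (Fin n) → EuclideanSpace ℝ (Fin m))
    (g' : Fin m → EuclideanSpace ℝ (Fin n) → EuclideanSpace ℝ (Fin n))
    (hg : ∀ j x, HasGradientAt (fun z => g z j) (g' j x) x)
    (hgconv : ∀ j, ConvexOn ℝ Set.univ (fun z => g z j))
    (φ : ℝ) (hφ : 0 < φ)
    (zs zφ : EuclideanSpace ℝ (Fin n)) (hzs : zs ∈ Z) (hzφ : zφ ∈ Z)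
    (μφ : EuclideanSpace ℝ (Fin m)) (hμφ : ∀ j, 0 ≤ μφ j)
    (hfeas : ∀ j, g zs j ≤ 0)
    (hopt : ∀ z ∈ Z, 0 ≤ ⟪f' zφ + ∑ j, μφ j • g' j zφ, z - zφ⟫_ℝ) :
    ∑ j, μφ j * g zφ j ≤ -⟪f' zφ, zφ - zs⟫_ℝ :=
  regularized_multiplier_ineq_general Z f' g g' hg hgconv zs zφ hzs μφ hμφ hfeas hopt
end

section
/- Assume the gradient of f is c-strongly monotone on Z for some c > 0, i.e. ⟨∇f(x) − ∇f(y), x − y⟩ ≥ c‖x − y‖² for all x, y ∈ Z. Let (z*, μ*) be a saddle point of L over Z × ℝᵐ₊ with g(z*) ≤ 0 componentwise and ⟨μ*, g(z*)⟩ = 0, and let (z*_φ, μ*_φ) be a saddle point of L_φ over Z × ℝᵐ₊. Then the regularized optimal multiplier is no larger in norm than the unregularized one: ‖μ*_φ‖ ≤ ‖μ*‖. -/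
open scoped InnerProductSpace

/-- the regularized optimal multiplier is no larger in norm: for saddle points of the Lagrangian
`L(z,μ) = f(z) + ⟨μ, g(z)⟩` and of the regularized Lagrangian
`L_φ(z,μ) = L(z,μ) − (φ/2)‖μ‖²` over `Z × ℝᵐ₊`:
`‖μ*_φ‖ ≤ ‖μ*‖`. -/
theorem regularized_multiplier_norm_le {n m : ℕ}
    (Z : Set (EuclideanSpace ℝ (Fin n)))
    (hZne : Z.Nonempty) (hZcomp : IsCompact Z) (hZconv : Convex ℝ Z)
    (f : EuclideanSpace ℝ (Fin n) → ℝ)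
    (f' : EuclideanSpace ℝ (Fin n) → EuclideanSpace ℝ (Fin n))
    (hf : ∀ x, HasGradientAt f (f' x) x)
    (g : EuclideanSpace ℝ (Fin n) → EuclideanSpace ℝ (Fin m))
    (hgdiff : ∀ j, Differentiable ℝ (fun z => g z j))
    (hgconv : ∀ j, ConvexOn ℝ Set.univ (fun z => g z j))
    (φ c : ℝ) (hφ : 0 < φ) (hc : 0 < c)
    -- ∇f is c-strongly monotone on Z
    (hmono : ∀ x ∈ Z, ∀ y ∈ Z, c * ‖x - y‖ ^ 2 ≤ ⟪f' x - f' y, x - y⟫_ℝ)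
    -- (z*, μ*): saddle point of L over Z × ℝᵐ₊, primal feasible and complementary
    (zs : EuclideanSpace ℝ (Fin n)) (μs : EuclideanSpace ℝ (Fin m))
    (hzs : zs ∈ Z) (hμs : ∀ j, 0 ≤ μs j)
    (hsaddle : ∀ z ∈ Z, ∀ μ : EuclideanSpace ℝ (Fin m), (∀ j, 0 ≤ μ j) →
      f zs + ∑ j, μ j * g zs j ≤ f zs + ∑ j, μs j * g zs j ∧
      f zs + ∑ j, μs j * g zs j ≤ f z + ∑ j, μs j * g z j)
    (hfeas : ∀ j, g zs j ≤ 0)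
    (hcomp : ∑ j, μs j * g zs j = 0)
    -- (z*_φ, μ*_φ): saddle point of L_φ over Z × ℝᵐ₊
    (zφ : EuclideanSpace ℝ (Fin n)) (μφ : EuclideanSpace ℝ (Fin m))
    (hzφ : zφ ∈ Z) (hμφ : ∀ j, 0 ≤ μφ j)
    (hsaddleφ : ∀ z ∈ Z, ∀ μ : EuclideanSpace ℝ (Fin m), (∀ j, 0 ≤ μ j) →
      f zφ + (∑ j, μ j * g zφ j) - φ / 2 * ‖μ‖ ^ 2 ≤
        f zφ + (∑ j, μφ j * g zφ j) - φ / 2 * ‖μφ‖ ^ 2 ∧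
      f zφ + (∑ j, μφ j * g zφ j) - φ / 2 * ‖μφ‖ ^ 2 ≤
        f z + (∑ j, μφ j * g z j) - φ / 2 * ‖μφ‖ ^ 2) :
    ‖μφ‖ ≤ ‖μs‖ := by
  obtain ⟨h1, h2⟩ := hsaddle zφ hzφ μφ hμφ
  obtain ⟨h3, h4⟩ := hsaddleφ zs hzs μs hμs
  have key : φ / 2 * ‖μφ‖ ^ 2 ≤ φ / 2 * ‖μs‖ ^ 2 := by linarith
  have h5 : ‖μφ‖ ^ 2 ≤ ‖μs‖ ^ 2 := by nlinarith
  exact (pow_le_pow_iff_left₀ (norm_nonneg _) (norm_nonneg _) two_ne_zero).mp h5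
end

section
/- Let Z ⊆ ℝⁿ be nonempty, compact and convex, f : ℝⁿ → ℝ continuous and strictly convex, G a real m×n matrix, h ∈ ℝᵐ, and φ > 0. Define L_φ(z,μ) := f(z) + ⟨μ, Gz + h⟩ − (φ/2)‖μ‖². Then L_φ possesses exactly one saddle point over Z × ℝᵐ₊, i.e. exactly one pair (z*, μ*) ∈ Z × ℝᵐ₊ with L_φ(z*, μ) ≤ L_φ(z*, μ*) ≤ L_φ(z, μ*) for all z ∈ Z and μ ∈ ℝᵐ₊. -/
/-!
For fixed `z` the regularized Lagrangian is `φ`-strongly concave in `μ`, and for fixed `μ` it is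
`f` plus an affine function of `z`, hence strictly convex on `Z`. Sion's minimax theorem yields a
saddle point once the multipliers are confined to a compact set. Since `L(z, μ) < L(z, 0)` as soon
as `‖μ‖ > 2 sup_Z ‖Gz + h‖ / φ`, the maximizing multiplier lies in the interior of a large ball,
and a local maximum of the concave function `L(z, ·)` on `ℝᵐ₊` is global. Saddle points are
interchangeable, so two of them give two minimizers of a strictly convex function and two
maximizers of a strictly concave one, which forces them to coincide.
-/

open scoped InnerProductSpace
open Set Metric

section SaddlePoint

variable {E F : Type*} {X : Set E} {Y : Set F} {f : E → F → ℝ} {a a' : E} {b b' : F}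

lemma isSaddlePointOn_iff_forall_le_and_le (ha : a ∈ X) (hb : b ∈ Y) :
    IsSaddlePointOn X Y f a b ↔ ∀ x ∈ X, ∀ y ∈ Y, f a y ≤ f a b ∧ f a b ≤ f x b :=
  ⟨fun h x hx y hy => ⟨h a ha y hy, h x hx b hb⟩,
    fun h x hx y hy => (h x hx y hy).1.trans (h x hx y hy).2⟩

lemma IsSaddlePointOn.eq_of_strictConvexOn_of_strictConcaveOn [AddCommGroup E] [Module ℝ E]
    [AddCommGroup F] [Module ℝ F]
    (hX : ∀ y ∈ Y, StrictConvexOn ℝ X (f · y)) (hY : ∀ x ∈ X, StrictConcaveOn ℝ Y (f x))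
    (ha : a ∈ X) (hb : b ∈ Y) (ha' : a' ∈ X) (hb' : b' ∈ Y)
    (h : IsSaddlePointOn X Y f a b) (h' : IsSaddlePointOn X Y f a' b') : a = a' ∧ b = b' := by
  have hab' := h.swap_left ha' hb h'
  have ha'b := h.swap_right ha hb' h'
  refine ⟨(hX b hb).eq_of_isMinOn ?_ ?_ ha ha', (hY a ha).eq_of_isMaxOn ?_ ?_ hb hb'⟩
  · exact isMinOn_iff.2 fun x hx => h x hx b hb
  · exact isMinOn_iff.2 fun x hx => ha'b x hx b hb
  · exact isMaxOn_iff.2 fun y hy => h a ha y hy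
  · exact isMaxOn_iff.2 fun y hy => hab' a ha y hy

end SaddlePoint

section RegularizedLagrangian

variable {E F : Type*} [NormedAddCommGroup F] [InnerProductSpace ℝ F]

noncomputable def regularizedLagrangian (f : E → ℝ) (g : E → F) (φ : ℝ) (z : E) (μ : F) : ℝ :=
  f z + ⟪μ, g z⟫_ℝ - φ / 2 * ‖μ‖ ^ 2

lemma strongConcaveOn_regularizedLagrangian {M : Set F} (hM : Convex ℝ M) (f : E → ℝ)
    (g : E → F) (φ : ℝ) (z : E) : StrongConcaveOn M φ (regularizedLagrangian f g φ z) := by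
  rw [strongConcaveOn_iff_convex]
  refine ((concaveOn_const (f z) hM).add ((innerₗ F (g z)).concaveOn hM)).congr fun μ _ => ?_
  simp [regularizedLagrangian, real_inner_comm]

section Affine

variable [AddCommGroup E] [Module ℝ E] {Z : Set E} {f : E → ℝ}

lemma convexOn_inner_comp_affineMap (hZ : Convex ℝ Z) (g : E →ᵃ[ℝ] F) (μ : F) :
    ConvexOn ℝ Z fun z => ⟪μ, g z⟫_ℝ :=
  (((innerₗ F μ).convexOn convex_univ).comp_affineMap g).subset (subset_univ _) hZ

lemma convexOn_regularizedLagrangian (hf : ConvexOn ℝ Z f) (g : E →ᵃ[ℝ] F) (φ : ℝ) (μ : F) :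
    ConvexOn ℝ Z (regularizedLagrangian f g φ · μ) :=
  (hf.add ((convexOn_inner_comp_affineMap hf.1 g μ).add_const (-(φ / 2 * ‖μ‖ ^ 2)))).congr
    fun z _ => by simp only [regularizedLagrangian, Pi.add_apply]; ring

lemma strictConvexOn_regularizedLagrangian (hf : StrictConvexOn ℝ Z f) (g : E →ᵃ[ℝ] F)
    (φ : ℝ) (μ : F) : StrictConvexOn ℝ Z (regularizedLagrangian f g φ · μ) :=
  (hf.add_convexOn
    ((convexOn_inner_comp_affineMap hf.1 g μ).add_const (-(φ / 2 * ‖μ‖ ^ 2)))).congr fun z _ => by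
    simp only [regularizedLagrangian, Pi.add_apply]; ring

end Affine

lemma regularizedLagrangian_lt_apply_zero {f : E → ℝ} {g : E → F} {φ C : ℝ} {z : E} {μ : F}
    (hφ : 0 < φ) (hgz : ‖g z‖ ≤ C) (hμ : 2 * C / φ < ‖μ‖) :
    regularizedLagrangian f g φ z μ < regularizedLagrangian f g φ z 0 := by
  have hC : 0 ≤ C := (norm_nonneg _).trans hgz
  have hφμ : 2 * C < φ * ‖μ‖ := by rw [div_lt_iff₀ hφ] at hμ; linarith
  have hμ0 : 0 < ‖μ‖ := (div_nonneg (by positivity) hφ.le).trans_lt hμ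
  have hinner : ⟪μ, g z⟫_ℝ ≤ ‖μ‖ * C :=
    (real_inner_le_norm _ _).trans (mul_le_mul_of_nonneg_left hgz (norm_nonneg _))
  simp only [regularizedLagrangian, inner_zero_left, norm_zero]
  nlinarith

theorem exists_isSaddlePointOn_regularizedLagrangian [NormedAddCommGroup E] [NormedSpace ℝ E]
    [FiniteDimensional ℝ F] {Z : Set E} {M : Set F} {f : E → ℝ} {φ : ℝ}
    (hZ : Z.Nonempty) (hZc : IsCompact Z) (hf : ConvexOn ℝ Z f) (hfc : ContinuousOn f Z)
    (g : E →ᵃ[ℝ] F) (hg : Continuous g) (hMc : IsClosed M) (hMconv : Convex ℝ M) (hM0 : 0 ∈ M)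
    (hφ : 0 < φ) : ∃ a ∈ Z, ∃ b ∈ M, IsSaddlePointOn Z M (regularizedLagrangian f g φ) a b := by
  set L := regularizedLagrangian f g φ
  obtain ⟨C, hC⟩ := hZc.exists_bound_of_continuousOn hg.continuousOn
  have hC0 : 0 ≤ C := (norm_nonneg _).trans (hC _ hZ.some_mem)
  set R := 2 * C / φ + 1
  obtain ⟨a, ha, b, hb, hab⟩ : ∃ a ∈ Z, ∃ b ∈ M ∩ closedBall 0 R, IsSaddlePointOn Z _ L a b := by
    refine Sion.exists_isSaddlePointOn hZ hf.1 hZc (fun μ _ => ?_)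
      (fun μ _ => (convexOn_regularizedLagrangian hf g φ μ).quasiconvexOn)
      (hMconv.inter (convex_closedBall 0 R)) ⟨0, hM0, mem_closedBall_self (by positivity)⟩
      ((isCompact_closedBall 0 R).inter_left hMc) (fun z _ => ?_) (fun z _ =>
        ((strongConcaveOn_regularizedLagrangian (hMconv.inter (convex_closedBall 0 R)) f g φ z
          ).strictConcaveOn hφ).concaveOn.quasiconcaveOn)
    · exact (hfc.add (continuous_const.inner hg).continuousOn).sub continuousOn_const
        |>.lowerSemicontinuousOn
    · exact (continuous_const.add (continuous_id.inner continuous_const)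
        |>.sub (continuous_const.mul (continuous_norm.pow 2))).continuousOn.upperSemicontinuousOn
  have hbR : ‖b‖ < R := by
    by_contra! hRb
    have := regularizedLagrangian_lt_apply_zero (f := f) hφ (hC a ha) ((lt_add_one _).trans_le hRb)
    exact this.not_ge (hab a ha 0 ⟨hM0, mem_closedBall_self (by positivity)⟩)
  have hlocal : IsLocalMaxOn (L a) M b := by
    filter_upwards [self_mem_nhdsWithin, mem_nhdsWithin_of_mem_nhds
      (isOpen_ball.mem_nhds (mem_ball_zero_iff.2 hbR))] with μ hμM hμR
    exact hab a ha μ ⟨hμM, ball_subset_closedBall hμR⟩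
  have hmax := IsMaxOn.of_isLocalMaxOn_of_concaveOn hb.1 hlocal
    ((strongConcaveOn_regularizedLagrangian hMconv f g φ a).strictConcaveOn hφ).concaveOn
  exact ⟨a, ha, b, hb.1, fun x hx μ hμ => (isMaxOn_iff.1 hmax μ hμ).trans (hab x hx b hb)⟩

end RegularizedLagrangian

lemma convex_nonnegOrthant (ι : Type*) [Fintype ι] :
    Convex ℝ {μ : EuclideanSpace ℝ ι | ∀ j, 0 ≤ μ j} := by
  intro x hx y hy s t hs ht _ j
  simp only [PiLp.add_apply, PiLp.smul_apply, smul_eq_mul]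
  exact add_nonneg (mul_nonneg hs (hx j)) (mul_nonneg ht (hy j))

lemma isClosed_nonnegOrthant (ι : Type*) [Fintype ι] :
    IsClosed {μ : EuclideanSpace ℝ ι | ∀ j, 0 ≤ μ j} := by
  simp only [ofPred_forall]
  exact isClosed_iInter fun j => isClosed_le continuous_const (PiLp.continuous_apply 2 _ j)

/-- for `Z` nonempty compact convex, `f` continuous strictly convex,
`g(z) = Gz + h` affine and `φ > 0`, the regularized Lagrangian
`L_φ(z,μ) = f(z) + ⟨μ, Gz + h⟩ − (φ/2)‖μ‖²` has exactly one saddle point over `Z × ℝᵐ₊`. -/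
theorem regularized_saddle_exists_unique {n m : ℕ}
    (Z : Set (EuclideanSpace ℝ (Fin n)))
    (hZne : Z.Nonempty) (hZcomp : IsCompact Z) (hZconv : Convex ℝ Z)
    (f : EuclideanSpace ℝ (Fin n) → ℝ)
    (hfcont : Continuous f) (hfconv : StrictConvexOn ℝ Set.univ f)
    (G : Matrix (Fin m) (Fin n) ℝ) (h : EuclideanSpace ℝ (Fin m))
    (φ : ℝ) (hφ : 0 < φ) :
    ∃! y : EuclideanSpace ℝ (Fin n) × EuclideanSpace ℝ (Fin m),
      (y.1 ∈ Z ∧ ∀ j, 0 ≤ y.2 j) ∧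
      ∀ z ∈ Z, ∀ μ : EuclideanSpace ℝ (Fin m), (∀ j, 0 ≤ μ j) →
        f y.1 + ⟪μ, Matrix.toEuclideanLin G y.1 + h⟫_ℝ - φ / 2 * ‖μ‖ ^ 2 ≤
          f y.1 + ⟪y.2, Matrix.toEuclideanLin G y.1 + h⟫_ℝ - φ / 2 * ‖y.2‖ ^ 2 ∧
        f y.1 + ⟪y.2, Matrix.toEuclideanLin G y.1 + h⟫_ℝ - φ / 2 * ‖y.2‖ ^ 2 ≤
          f z + ⟪y.2, Matrix.toEuclideanLin G z + h⟫_ℝ - φ / 2 * ‖y.2‖ ^ 2 := by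
  set M := {μ : EuclideanSpace ℝ (Fin m) | ∀ j, 0 ≤ μ j}
  set g := (Matrix.toEuclideanLin G).toAffineMap + AffineMap.const ℝ _ h
  have hf : StrictConvexOn ℝ Z f := hfconv.subset (subset_univ Z) hZconv
  obtain ⟨a, ha, b, hb, hab⟩ := exists_isSaddlePointOn_regularizedLagrangian hZne hZcomp
    hf.convexOn hfcont.continuousOn g g.continuous_of_finiteDimensional
    (isClosed_nonnegOrthant _) (convex_nonnegOrthant _) (fun _ => le_rfl) hφ
  refine ⟨(a, b), ⟨⟨ha, hb⟩, (isSaddlePointOn_iff_forall_le_and_le ha hb).1 hab⟩, ?_⟩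
  rintro ⟨a', b'⟩ ⟨⟨ha', hb'⟩, h'⟩
  have hab' := (isSaddlePointOn_iff_forall_le_and_le (Y := M)
    (f := regularizedLagrangian f g φ) ha' hb').2 h'
  obtain ⟨rfl, rfl⟩ := hab.eq_of_strictConvexOn_of_strictConcaveOn
    (fun μ _ => strictConvexOn_regularizedLagrangian hf g φ μ)
    (fun z _ => (strongConcaveOn_regularizedLagrangian (convex_nonnegOrthant _) f g φ z
      ).strictConcaveOn hφ) ha hb ha' hb' hab'
  rfl
end

section
/- For the online iterates yₘ := Tₘᴷ(yₘ₋₁), set B := ρ(1 − Δᴷ)/(1 − Δ) + Δᴷσ. Then for every m ≥ 0 the nonasymptotic tracking bound ‖yₘ − y*ₘ‖ ≤ B(1 − Δ^{Km})/(1 − Δᴷ) + Δ^{Km}‖y₀ − y*₀‖ holds. -/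
/-- One-step approximate contraction bound for the K-fold iterate. -/
lemma iterate_approx_bound {Y : Type*} [NormedAddCommGroup Y]
    (Δ ρ : ℝ) (hΔ0 : 0 ≤ Δ) (hρ : 0 ≤ ρ)
    (That T : Y → Y) (yst : Y)
    (hcontr : ∀ (y y' : Y), ‖That y - That y'‖ ≤ Δ * ‖y - y'‖)
    (hfix : That yst = yst)
    (hT : ∀ y, ‖T y - That y‖ ≤ ρ) :
    ∀ (n : ℕ) (z : Y), ‖T^[n] z - yst‖ ≤ Δ ^ n * ‖z - yst‖ + ρ * ∑ i ∈ Finset.range n, Δ ^ i := by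
  intro n
  induction n with
  | zero => intro z; simp
  | succ n ih =>
    intro z
    rw [Function.iterate_succ_apply']
    have h1 : ‖T (T^[n] z) - yst‖ ≤ ρ + Δ * ‖T^[n] z - yst‖ := by
      calc ‖T (T^[n] z) - yst‖ = ‖(T (T^[n] z) - That (T^[n] z)) + (That (T^[n] z) - That yst)‖ := by
            rw [hfix]; abel_nf
        _ ≤ ‖T (T^[n] z) - That (T^[n] z)‖ + ‖That (T^[n] z) - That yst‖ := norm_add_le _ _
        _ ≤ ρ + Δ * ‖T^[n] z - yst‖ := add_le_add (hT _) (hcontr _ _)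
    have h3 : Δ * ‖T^[n] z - yst‖ ≤ Δ * (Δ ^ n * ‖z - yst‖ + ρ * ∑ i ∈ Finset.range n, Δ ^ i) :=
      mul_le_mul_of_nonneg_left (ih z) hΔ0
    rw [geom_sum_succ]
    calc ‖T (T^[n] z) - yst‖ ≤ ρ + Δ * (Δ ^ n * ‖z - yst‖ + ρ * ∑ i ∈ Finset.range n, Δ ^ i) := by
          linarith
      _ = Δ ^ (n + 1) * ‖z - yst‖ + ρ * (Δ * ∑ i ∈ Finset.range n, Δ ^ i + 1) := by ring

/-- nonasymptotic tracking bound for the online iterates, with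
`B = ρ(1 − Δᴷ)/(1 − Δ) + Δᴷσ`:
`‖yₘ − y*ₘ‖ ≤ B(1 − Δ^{Km})/(1 − Δᴷ) + Δ^{Km}‖y₀ − y*₀‖` for every `m ≥ 0`. -/
theorem online_tracking_nonasymptotic {Y : Type*} [NormedAddCommGroup Y] [NormedSpace ℝ Y]
    (Δ ρ σ : ℝ) (hΔ0 : 0 ≤ Δ) (hΔ1 : Δ < 1) (hρ : 0 ≤ ρ) (hσ : 0 ≤ σ)
    (K : ℕ) (hK : 1 ≤ K)
    (That T : ℕ → Y → Y) (ys : ℕ → Y)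
    (hcontr : ∀ m (y y' : Y), ‖That m y - That m y'‖ ≤ Δ * ‖y - y'‖)
    (hfix : ∀ m, That m (ys m) = ys m)
    (hT : ∀ m y, ‖T m y - That m y‖ ≤ ρ)
    (hdrift : ∀ m, ‖ys (m + 1) - ys m‖ ≤ σ)
    (y : ℕ → Y) (hy : ∀ m, y (m + 1) = (T (m + 1))^[K] (y m)) :
    ∀ m : ℕ, ‖y m - ys m‖ ≤
      (ρ * (1 - Δ ^ K) / (1 - Δ) + Δ ^ K * σ) * (1 - Δ ^ (K * m)) / (1 - Δ ^ K)
        + Δ ^ (K * m) * ‖y 0 - ys 0‖ := by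
  have hΔne : Δ ≠ 1 := ne_of_lt hΔ1
  have hqlt : Δ ^ K < 1 := pow_lt_one₀ hΔ0 hΔ1 (by omega)
  have hq0 : (0:ℝ) ≤ Δ ^ K := pow_nonneg hΔ0 K
  have hSK : ∑ i ∈ Finset.range K, Δ ^ i = (1 - Δ ^ K) / (1 - Δ) := by
    rw [geom_sum_eq hΔne]
    rw [div_eq_div_iff (by linarith) (by linarith)]; ring
  have hB0 : (0:ℝ) ≤ ρ * (1 - Δ ^ K) / (1 - Δ) + Δ ^ K * σ := by
    apply add_nonneg
    · apply div_nonneg (mul_nonneg hρ (by linarith)) (by linarith)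
    · exact mul_nonneg hq0 hσ
  -- key recursion
  have key : ∀ m, ‖y (m + 1) - ys (m + 1)‖ ≤
      Δ ^ K * ‖y m - ys m‖ + (ρ * (1 - Δ ^ K) / (1 - Δ) + Δ ^ K * σ) := by
    intro m
    have h1 := iterate_approx_bound Δ ρ hΔ0 hρ (That (m+1)) (T (m+1)) (ys (m+1))
      (hcontr (m+1)) (hfix (m+1)) (hT (m+1)) K (y m)
    rw [hy m]
    have h2 : ‖y m - ys (m + 1)‖ ≤ ‖y m - ys m‖ + σ := by
      calc ‖y m - ys (m + 1)‖ = ‖(y m - ys m) + (ys m - ys (m+1))‖ := by abel_nf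
        _ ≤ ‖y m - ys m‖ + ‖ys m - ys (m+1)‖ := norm_add_le _ _
        _ ≤ ‖y m - ys m‖ + σ := by
            have := hdrift m; rw [← norm_neg] at this
            simp only [neg_sub] at this; linarith
    have h3 : Δ ^ K * ‖y m - ys (m+1)‖ ≤ Δ ^ K * (‖y m - ys m‖ + σ) :=
      mul_le_mul_of_nonneg_left h2 hq0
    calc ‖(T (m+1))^[K] (y m) - ys (m+1)‖
        ≤ Δ ^ K * ‖y m - ys (m+1)‖ + ρ * ∑ i ∈ Finset.range K, Δ ^ i := h1
      _ ≤ Δ ^ K * (‖y m - ys m‖ + σ) + ρ * ∑ i ∈ Finset.range K, Δ ^ i := by linarith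
      _ = Δ ^ K * ‖y m - ys m‖ + (ρ * (1 - Δ ^ K) / (1 - Δ) + Δ ^ K * σ) := by
          rw [hSK]; ring
  -- closed form by induction with geometric sum
  have main : ∀ m, ‖y m - ys m‖ ≤
      (ρ * (1 - Δ ^ K) / (1 - Δ) + Δ ^ K * σ) * ∑ i ∈ Finset.range m, (Δ ^ K) ^ i
        + (Δ ^ K) ^ m * ‖y 0 - ys 0‖ := by
    intro m
    induction m with
    | zero => simp
    | succ m ih =>
      have h1 := key m
      have h2 : Δ ^ K * ‖y m - ys m‖ ≤ Δ ^ K *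
          ((ρ * (1 - Δ ^ K) / (1 - Δ) + Δ ^ K * σ) * ∑ i ∈ Finset.range m, (Δ ^ K) ^ i
            + (Δ ^ K) ^ m * ‖y 0 - ys 0‖) :=
        mul_le_mul_of_nonneg_left ih hq0
      rw [geom_sum_succ]
      calc ‖y (m+1) - ys (m+1)‖
          ≤ Δ ^ K * ((ρ * (1 - Δ ^ K) / (1 - Δ) + Δ ^ K * σ) * ∑ i ∈ Finset.range m, (Δ ^ K) ^ i
              + (Δ ^ K) ^ m * ‖y 0 - ys 0‖) + (ρ * (1 - Δ ^ K) / (1 - Δ) + Δ ^ K * σ) := by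
            linarith
        _ = (ρ * (1 - Δ ^ K) / (1 - Δ) + Δ ^ K * σ) *
              (Δ ^ K * ∑ i ∈ Finset.range m, (Δ ^ K) ^ i + 1)
              + (Δ ^ K) ^ (m + 1) * ‖y 0 - ys 0‖ := by ring
  intro m
  have hmain := main m
  have hgeom : ∑ i ∈ Finset.range m, (Δ ^ K) ^ i = (1 - (Δ ^ K) ^ m) / (1 - Δ ^ K) := by
    rw [geom_sum_eq (ne_of_lt hqlt)]
    rw [div_eq_div_iff (by linarith) (by linarith)]; ring
  have hqm : (Δ ^ K) ^ m = Δ ^ (K * m) := by rw [← pow_mul]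
  rw [hgeom, hqm] at hmain
  calc ‖y m - ys m‖
      ≤ (ρ * (1 - Δ ^ K) / (1 - Δ) + Δ ^ K * σ) * ((1 - Δ ^ (K * m)) / (1 - Δ ^ K))
        + Δ ^ (K * m) * ‖y 0 - ys 0‖ := hmain
    _ = (ρ * (1 - Δ ^ K) / (1 - Δ) + Δ ^ K * σ) * (1 - Δ ^ (K * m)) / (1 - Δ ^ K)
        + Δ ^ (K * m) * ‖y 0 - ys 0‖ := by ring
end
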